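/- arXiv:0903.4691 — 12 statements merged into one kernel-verified Lean document; each statement's English description precedes it below -/
import Mathlib

section
/- Let λ ≥ μ and λ' ≥ μ' be infinite cardinals and κ any cardinal, and let (f_β)_{β∈κ} be a given family of functions from S_μ(λ) to S_{μ'}(λ'). Then the following are equivalent: (a) whenever D is an ultrafilter on S_μ(λ) that covers λ, there exists β ∈ κ such that the pushforward ultrafilter f_β(D) covers λ'; (b) for every function g : κ → λ' there exist finite sets F ⊆ κ and G ⊆ λ such that [G] ⊆ ⋃_{β∈F} f_β⁻¹[{s' ∈ S_{μ'}(λ') : g(β) ∈ s'}]. -/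
open Cardinal Set

universe u

/-- `SmallSet μ λ` : the set `S_μ(λ)` of all subsets of (a carrier of) `λ`
of cardinality `< μ`. -/
abbrev SmallSet (mu lam : Cardinal.{u}) : Type u :=
  {s : Set (Quotient.out lam) // #s < mu}

/-- An ultrafilter `D` on `S_μ(λ)` covers `λ` if the cone `[{α}]` belongs to `D`
for every `α ∈ λ`. -/
def Covers {mu lam : Cardinal.{u}} (D : Ultrafilter (SmallSet mu lam)) : Prop :=
  ∀ α : Quotient.out lam, {s : SmallSet mu lam | α ∈ s.val} ∈ D

/-- Lemma (Lemma 4 of the paper): for a given family `(f_β)_{β∈κ}` of functions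
`S_μ(λ) → S_{μ'}(λ')`, condition (a) (every covering ultrafilter pushes forward,
under some `f_β`, to a covering ultrafilter) is equivalent to condition (b). -/
theorem lemma_covers_iff (lam mu lam' mu' kappa : Cardinal.{u})
    (hmu : ℵ₀ ≤ mu) (hml : mu ≤ lam) (hmu' : ℵ₀ ≤ mu') (hml' : mu' ≤ lam')
    (f : Quotient.out kappa → SmallSet mu lam → SmallSet mu' lam') :
    (∀ D : Ultrafilter (SmallSet mu lam), Covers D →
        ∃ β : Quotient.out kappa, Covers (Ultrafilter.map (f β) D)) ↔
      (∀ g : Quotient.out kappa → Quotient.out lam',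
        ∃ (F : Set (Quotient.out kappa)) (G : Set (Quotient.out lam)),
          F.Finite ∧ G.Finite ∧
            {s : SmallSet mu lam | G ⊆ s.val} ⊆
              ⋃ β ∈ F, f β ⁻¹' {s' : SmallSet mu' lam' | g β ∈ s'.val}) := by
  constructor
  · -- (a) → (b)
    intro ha g
    by_contra hb
    push_neg at hb
    -- index type for our generating family
    set B : (Quotient.out lam ⊕ Quotient.out kappa) → Set (SmallSet mu lam) :=
      Sum.elim (fun α => {s : SmallSet mu lam | α ∈ s.val})
        (fun β => {s : SmallSet mu lam | g β ∉ (f β s).val}) with hB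
    have fip : ∀ T : Finset (Set (SmallSet mu lam)),
        (↑T : Set (Set (SmallSet mu lam))) ⊆ Set.range B →
        (⋂₀ (↑T : Set (Set (SmallSet mu lam)))).Nonempty := by
      intro T hTS
      have hch : ∀ x ∈ (↑T : Set (Set (SmallSet mu lam))), ∃ i, B i = x :=
        fun x hx => hTS hx
      have hne : Nonempty (Quotient.out lam) := by
        rw [← Cardinal.mk_ne_zero_iff, Cardinal.mk_out]
        exact ((Cardinal.aleph0_pos.trans_le hmu).trans_le hml).ne'
      haveI : Nonempty (Quotient.out lam ⊕ Quotient.out kappa) := ⟨Sum.inl hne.some⟩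
      classical
      choose! c hc using hch
      set u : Finset (Quotient.out lam ⊕ Quotient.out kappa) := T.image c with hu
      set Gs : Set (Quotient.out lam) := Sum.inl ⁻¹' (↑u : Set (Quotient.out lam ⊕ Quotient.out kappa)) with hGs
      set Fs : Set (Quotient.out kappa) := Sum.inr ⁻¹' (↑u : Set (Quotient.out lam ⊕ Quotient.out kappa)) with hFs
      have hGfin : Gs.Finite := (u.finite_toSet).preimage Sum.inl_injective.injOn
      have hFfin : Fs.Finite := (u.finite_toSet).preimage Sum.inr_injective.injOn
      have hns := hb Fs Gs hFfin hGfin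
      rw [Set.not_subset] at hns
      obtain ⟨s, hs1, hs2⟩ := hns
      simp only [Set.mem_iUnion, Set.mem_preimage, Set.mem_setOf_eq, not_exists] at hs2
      refine ⟨s, ?_⟩
      intro x hxT
      have hcx : B (c x) = x := hc x hxT
      have hcu : c x ∈ u := Finset.mem_image_of_mem c hxT
      rw [← hcx]
      rcases hcu' : c x with α | β
      · have hα : α ∈ Gs := by rw [hGs]; simpa [hcu'] using hcu
        simpa [hB, hcu'] using hs1 hα
      · have hβ : β ∈ Fs := by rw [hFs]; simpa [hcu'] using hcu
        simp only [hB, hcu', Sum.elim_inr, Set.mem_setOf_eq]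
        exact hs2 β hβ
    obtain ⟨D, hD⟩ :=
      Ultrafilter.exists_ultrafilter_of_finite_inter_nonempty (Set.range B) fip
    have hcov : Covers D := fun α => hD ⟨Sum.inl α, rfl⟩
    obtain ⟨β, hβ⟩ := ha D hcov
    have h1 : f β ⁻¹' {s' : SmallSet mu' lam' | g β ∈ s'.val} ∈ D :=
      Ultrafilter.mem_map.mp (hβ (g β))
    have h2 : {s : SmallSet mu lam | g β ∉ (f β s).val} ∈ D := hD ⟨Sum.inr β, rfl⟩
    have h3 : (f β ⁻¹' {s' : SmallSet mu' lam' | g β ∈ s'.val})ᶜ ∈ D := h2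
    exact (Ultrafilter.compl_notMem_iff.mpr h1) h3
  · -- (b) → (a)
    intro hb D hD
    by_contra hcon
    push_neg at hcon
    simp only [Covers, not_forall] at hcon
    choose g hg using hcon
    obtain ⟨F, G, hF, hG, hsub⟩ := hb g
    have hcone : {s : SmallSet mu lam | G ⊆ s.val} ∈ D := by
      have : {s : SmallSet mu lam | G ⊆ s.val} =
          ⋂ α ∈ G, {s : SmallSet mu lam | α ∈ s.val} := by
        ext s; simp [Set.subset_def]
      rw [this]
      exact (Filter.biInter_mem hG).mpr fun α _ => hD α
    have hU : (⋃ β ∈ F, f β ⁻¹' {s' : SmallSet mu' lam' | g β ∈ s'.val}) ∈ D :=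
      Filter.mem_of_superset hcone hsub
    obtain ⟨β, _, hβ⟩ := (Ultrafilter.finite_biUnion_mem_iff hF).mp hU
    exact hg β (Ultrafilter.mem_map.mpr hβ)
end

section
/- Let λ ≥ μ and λ' ≥ μ' be infinite cardinals and κ any cardinal. Then (λ,μ) ⇒^κ (λ',μ') holds if and only if there are κ functions (f_β)_{β∈κ} : S_μ(λ) → S_{μ'}(λ') such that for every function g : κ → λ' there exist finite sets F ⊆ κ and G ⊆ λ with [G] ⊆ ⋃_{β∈F} f_β⁻¹[{s' ∈ S_{μ'}(λ') : g(β) ∈ s'}]. -/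
open Cardinal Set

universe u

/-- The relation `(λ, μ) ⇒^κ (λ', μ')`: there are `κ` functions
`f_β : S_μ(λ) → S_{μ'}(λ')` such that every ultrafilter covering `λ` pushes
forward, under some `f_β`, to an ultrafilter covering `λ'`. -/
def CovRel (lam mu lam' mu' kappa : Cardinal.{u}) : Prop :=
  ∃ f : Quotient.out kappa → SmallSet mu lam → SmallSet mu' lam',
    ∀ D : Ultrafilter (SmallSet mu lam), Covers D →
      ∃ β : Quotient.out kappa, Covers (Ultrafilter.map (f β) D)

/-- Theorem 3, (a) ↔ (b): `(λ,μ) ⇒^κ (λ',μ')` holds iff there are `κ` functions `f_β` such that for every `g : κ → λ'` there are finite `F ⊆ κ`, `G ⊆ λ` with `[G] ⊆ ⋃_{β∈F} f_β⁻¹[{g(β)}]`. -/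
theorem covRel_iff_funs (lam mu lam' mu' kappa : Cardinal.{u})
    (hmu : ℵ₀ ≤ mu) (hml : mu ≤ lam) (hmu' : ℵ₀ ≤ mu') (hml' : mu' ≤ lam') :
    CovRel lam mu lam' mu' kappa ↔
      (∃ f : Quotient.out kappa → SmallSet mu lam → SmallSet mu' lam',
        ∀ g : Quotient.out kappa → Quotient.out lam',
          ∃ (F : Set (Quotient.out kappa)) (G : Set (Quotient.out lam)),
            F.Finite ∧ G.Finite ∧
              {s : SmallSet mu lam | G ⊆ s.val} ⊆
                ⋃ β ∈ F, f β ⁻¹' {s' : SmallSet mu' lam' | g β ∈ s'.val}) := by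
  constructor
  · rintro ⟨f, hf⟩
    refine ⟨f, fun g => ?_⟩
    by_contra h
    push_neg at h
    -- family generating a filter
    set E : (Quotient.out lam) ⊕ (Quotient.out kappa) → Set (SmallSet mu lam) :=
      fun i => Sum.rec (fun α => {s : SmallSet mu lam | α ∈ s.val})
        (fun β => {s : SmallSet mu lam | g β ∈ (f β s).val}ᶜ) i with hE
    have hne : Filter.NeBot (Filter.generate (Set.range E)) := by
      rw [Filter.generate_neBot_iff]
      intro t hts htf
      -- write t as image of a finite index set
      have : ∃ I ⊆ (Set.univ : Set ((Quotient.out lam) ⊕ (Quotient.out kappa))),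
          I.Finite ∧ E '' I = t := by
        have := (Set.exists_subset_image_finite_and
          (f := E) (s := Set.univ) (p := fun u => u = t)).mp
          ⟨t, by rwa [Set.image_univ], htf, rfl⟩
        tauto
      obtain ⟨I, -, hIf, hIt⟩ := this
      set G : Set (Quotient.out lam) := Sum.inl ⁻¹' I with hG
      set F : Set (Quotient.out kappa) := Sum.inr ⁻¹' I with hF
      have hGf : G.Finite := hIf.preimage Sum.inl_injective.injOn
      have hFf : F.Finite := hIf.preimage Sum.inr_injective.injOn
      obtain ⟨s, hsG, hs⟩ := Set.not_subset.mp (h F G hFf hGf)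
      refine ⟨s, ?_⟩
      intro x hx
      rw [← hIt] at hx
      obtain ⟨i, hiI, rfl⟩ := hx
      cases i with
      | inl α => exact hsG hiI
      | inr β =>
        intro hmem
        exact hs (Set.mem_biUnion (show β ∈ F from hiI) hmem)
    set D : Ultrafilter (SmallSet mu lam) := @Ultrafilter.of _ _ hne with hD
    have hle : (D : Filter (SmallSet mu lam)) ≤ Filter.generate (Set.range E) :=
      Ultrafilter.of_le _
    have hmemD : ∀ i, E i ∈ D := fun i =>
      hle (Filter.mem_generate_of_mem ⟨i, rfl⟩)
    have hcov : Covers D := fun α => hmemD (Sum.inl α)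
    obtain ⟨β, hβ⟩ := hf D hcov
    have h1 : {s : SmallSet mu lam | g β ∈ (f β s).val} ∈ D := by
      have := hβ (g β)
      rwa [Ultrafilter.mem_map] at this
    have h2 : {s : SmallSet mu lam | g β ∈ (f β s).val}ᶜ ∈ D := hmemD (Sum.inr β)
    exact (Ultrafilter.compl_mem_iff_notMem.mp h2) h1
  · rintro ⟨f, hf⟩
    refine ⟨f, fun D hD => ?_⟩
    by_contra h
    push_neg at h
    have hg : ∀ β : Quotient.out kappa, ∃ α' : Quotient.out lam',
        {s : SmallSet mu lam | α' ∈ (f β s).val} ∉ D := by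
      intro β
      have := h β
      rw [Covers] at this
      push_neg at this
      obtain ⟨α', hα'⟩ := this
      exact ⟨α', by rwa [Ultrafilter.mem_map] at hα'⟩
    choose g hg using hg
    obtain ⟨F, G, hFf, hGf, hsub⟩ := hf g
    have hGmem : {s : SmallSet mu lam | G ⊆ s.val} ∈ D := by
      have : {s : SmallSet mu lam | G ⊆ s.val} =
          ⋂ α ∈ G, {s : SmallSet mu lam | α ∈ s.val} := by
        ext s; simp [Set.subset_def]
      rw [this]
      exact (Filter.biInter_mem hGf).mpr fun α _ => hD α
    have hU : (⋃ β ∈ F, f β ⁻¹' {s' : SmallSet mu' lam' | g β ∈ s'.val}) ∈ D :=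
      Filter.mem_of_superset hGmem hsub
    obtain ⟨β, -, hβ⟩ := (Ultrafilter.finite_biUnion_mem_iff hFf).mp hU
    exact hg β hβ
end

section
/- Let λ ≥ μ and λ' ≥ μ' be infinite cardinals and κ any cardinal. Then (λ,μ) ⇒^κ (λ',μ') holds if and only if there is a family (C_{α,β})_{α∈λ', β∈κ} of subsets of S_μ(λ) such that: (i) for every β ∈ κ and every H ⊆ λ' with |H| ≥ μ', ⋂_{α∈H} C_{α,β} = ∅; and (ii) for every function g : κ → λ' there exist finite sets F ⊆ κ and G ⊆ λ such that [G] ⊆ ⋃_{β∈F} C_{g(β),β}. -/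
open Cardinal Set

universe u

/-- Theorem 3, (a) ↔ (c): `(λ,μ) ⇒^κ (λ',μ')` holds iff there is a family `(C_{α,β})` of subsets of `S_μ(λ)` with empty `≥ μ'`-fold intersections in the first coordinate, such that every `g : κ → λ'` admits finite `F`, `G` with `[G] ⊆ ⋃_{β∈F} C_{g(β),β}`. -/
theorem covRel_iff_interFamily (lam mu lam' mu' kappa : Cardinal.{u})
    (hmu : ℵ₀ ≤ mu) (hml : mu ≤ lam) (hmu' : ℵ₀ ≤ mu') (hml' : mu' ≤ lam') :
    CovRel lam mu lam' mu' kappa ↔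
      (∃ C : Quotient.out lam' → Quotient.out kappa → Set (SmallSet mu lam),
        (∀ β : Quotient.out kappa, ∀ H : Set (Quotient.out lam'),
          mu' ≤ #H → ⋂ α ∈ H, C α β = (∅ : Set (SmallSet mu lam))) ∧
        (∀ g : Quotient.out kappa → Quotient.out lam',
          ∃ (F : Set (Quotient.out kappa)) (G : Set (Quotient.out lam)),
            F.Finite ∧ G.Finite ∧
              {s : SmallSet mu lam | G ⊆ s.val} ⊆ ⋃ β ∈ F, C (g β) β)) := by
  constructor
  · rintro ⟨f, hf⟩
    refine ⟨fun α β => {s | α ∈ (f β s).val}, ?_, ?_⟩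
    · intro β H hH
      ext s
      simp only [mem_iInter, mem_setOf_eq, mem_empty_iff_false, iff_false]
      intro hs
      have hsub : H ⊆ (f β s).val := fun α hα => hs α hα
      have h1 : #H ≤ #((f β s).val) := Cardinal.mk_le_mk_of_subset hsub
      exact absurd (hH.trans h1) (not_le.mpr (f β s).2)
    · intro g
      by_contra hneg
      push_neg at hneg
      -- the two families of generators
      set S₁ : Set (Set (SmallSet mu lam)) :=
        Set.range (fun α : Quotient.out lam => {s : SmallSet mu lam | α ∈ s.val}) with hS₁
      set S₂ : Set (Set (SmallSet mu lam)) :=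
        Set.range (fun β : Quotient.out kappa => {s : SmallSet mu lam | g β ∈ (f β s).val}ᶜ)
          with hS₂
      have hNeBot : Filter.NeBot (Filter.generate (S₁ ∪ S₂)) := by
        rw [Filter.generate_neBot_iff]
        intro t hts htfin
        -- choice functions extracting indices
        have hc1 : ∀ x : ↥(t ∩ S₁), ∃ α : Quotient.out lam,
            (x : Set (SmallSet mu lam)) = {s : SmallSet mu lam | α ∈ s.val} := by
          rintro ⟨x, _, α, rfl⟩
          exact ⟨α, rfl⟩
        have hc2 : ∀ x : ↥(t ∩ S₂), ∃ β : Quotient.out kappa,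
            (x : Set (SmallSet mu lam)) = {s : SmallSet mu lam | g β ∈ (f β s).val}ᶜ := by
          rintro ⟨x, _, β, rfl⟩
          exact ⟨β, rfl⟩
        choose a ha using hc1
        choose b hb using hc2
        have hfin1 : (t ∩ S₁).Finite := htfin.inter_of_left _
        have hfin2 : (t ∩ S₂).Finite := htfin.inter_of_left _
        haveI := hfin1.to_subtype
        haveI := hfin2.to_subtype
        have hGfin : (Set.range a).Finite := Set.finite_range a
        have hFfin : (Set.range b).Finite := Set.finite_range b
        obtain ⟨s, hsG, hsU⟩ :
            ∃ s : SmallSet mu lam, Set.range a ⊆ s.val ∧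
              s ∉ ⋃ β ∈ Set.range b, {s : SmallSet mu lam | g β ∈ (f β s).val} := by
          have := hneg (Set.range b) (Set.range a)
          by_contra hcon
          push_neg at hcon
          exact this hFfin hGfin (fun s hs => by
            by_contra hnot
            exact hnot (hcon s hs))
        refine ⟨s, ?_⟩
        rintro x hx
        rcases hts hx with hx1 | hx2
        · rw [show x = {s : SmallSet mu lam | a ⟨x, hx, hx1⟩ ∈ s.val} from ha ⟨x, hx, hx1⟩]
          exact hsG ⟨⟨x, hx, hx1⟩, rfl⟩
        · rw [show x = {s : SmallSet mu lam | g (b ⟨x, hx, hx2⟩) ∈ (f (b ⟨x, hx, hx2⟩) s).val}ᶜ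
            from hb ⟨x, hx, hx2⟩]
          intro hs
          exact hsU (Set.mem_biUnion ⟨⟨x, hx, hx2⟩, rfl⟩ hs)
      set D : Ultrafilter (SmallSet mu lam) := @Ultrafilter.of _ _ hNeBot with hD
      have hle : ∀ u ∈ Filter.generate (S₁ ∪ S₂), u ∈ D :=
        fun u hu => (@Ultrafilter.of_le _ _ hNeBot) hu
      have hcov : Covers D := fun α =>
        hle _ (Filter.GenerateSets.basic (Or.inl ⟨α, rfl⟩))
      obtain ⟨β, hβ⟩ := hf D hcov
      have h1 : {s : SmallSet mu lam | g β ∈ (f β s).val} ∈ D :=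
        Ultrafilter.mem_map.mp (hβ (g β))
      have h2 : {s : SmallSet mu lam | g β ∈ (f β s).val}ᶜ ∈ D :=
        hle _ (Filter.GenerateSets.basic (Or.inr ⟨β, rfl⟩))
      exact (Ultrafilter.compl_mem_iff_notMem.mp h2) h1
  · rintro ⟨C, h1, h2⟩
    have hbound : ∀ (β : Quotient.out kappa) (s : SmallSet mu lam),
        #({α | s ∈ C α β} : Set (Quotient.out lam')) < mu' := by
      intro β s
      by_contra hcon
      push_neg at hcon
      have := h1 β _ hcon
      have hs : s ∈ ⋂ α ∈ {α | s ∈ C α β}, C α β :=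
        Set.mem_iInter₂.mpr fun α hα => hα
      rw [this] at hs
      exact hs
    refine ⟨fun β s => ⟨{α | s ∈ C α β}, hbound β s⟩, ?_⟩
    intro D hD
    by_contra hno
    push_neg at hno
    have hg : ∀ β : Quotient.out kappa, ∃ α : Quotient.out lam',
        {t : SmallSet mu' lam' | α ∈ t.val} ∉ Ultrafilter.map
          (fun s => (⟨{α | s ∈ C α β}, hbound β s⟩ : SmallSet mu' lam')) D := by
      intro β
      have := hno β
      unfold Covers at this
      push_neg at this
      exact this
    choose g hg using hg
    obtain ⟨F, G, hFfin, hGfin, hsub⟩ := h2 g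
    have hCnot : ∀ β, C (g β) β ∉ D := by
      intro β
      have := hg β
      rw [Ultrafilter.mem_map] at this
      convert this using 2
      rfl
    have hcompl : (⋃ β ∈ F, C (g β) β)ᶜ ∈ D := by
      rw [Set.compl_iUnion₂]
      exact (Filter.biInter_mem hFfin).mpr fun β _ =>
        Ultrafilter.compl_mem_iff_notMem.mpr (hCnot β)
    have hcone : {s : SmallSet mu lam | G ⊆ s.val} ∈ D := by
      have : {s : SmallSet mu lam | G ⊆ s.val} =
          ⋂ α ∈ G, {s : SmallSet mu lam | α ∈ s.val} := by
        ext s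
        simp [Set.subset_def]
      rw [this]
      exact (Filter.biInter_mem hGfin).mpr fun α _ => hD α
    have hunion : (⋃ β ∈ F, C (g β) β) ∈ D := Filter.mem_of_superset hcone hsub
    exact (Ultrafilter.compl_mem_iff_notMem.mp hcompl) hunion
end

section
/- Let λ ≥ μ and λ' ≥ μ' be infinite cardinals and κ any cardinal. Then (λ,μ) ⇒^κ (λ',μ') holds if and only if there is a family (B_{α,β})_{α∈λ', β∈κ} of subsets of S_μ(λ) such that: (i) for every β ∈ κ and every H ⊆ λ' with |H| ≥ μ', ⋃_{α∈H} B_{α,β} = S_μ(λ); and (ii) for every function g : κ → λ' there exist finite sets F ⊆ κ and G ⊆ λ such that [G] ∩ ⋂_{β∈F} B_{g(β),β} = ∅. -/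
open Cardinal Set

universe u

/-- Theorem 3, (a) ↔ (c′): `(λ,μ) ⇒^κ (λ',μ')` holds iff there is a family `(B_{α,β})` of subsets of `S_μ(λ)` whose `≥ μ'`-fold unions in the first coordinate are all of `S_μ(λ)`, such that every `g : κ → λ'` admits finite `F`, `G` with `[G] ∩ ⋂_{β∈F} B_{g(β),β} = ∅`. -/
theorem covRel_iff_unionFamily (lam mu lam' mu' kappa : Cardinal.{u})
    (hmu : ℵ₀ ≤ mu) (hml : mu ≤ lam) (hmu' : ℵ₀ ≤ mu') (hml' : mu' ≤ lam') :
    CovRel lam mu lam' mu' kappa ↔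
      (∃ B : Quotient.out lam' → Quotient.out kappa → Set (SmallSet mu lam),
        (∀ β : Quotient.out kappa, ∀ H : Set (Quotient.out lam'),
          mu' ≤ #H → ⋃ α ∈ H, B α β = (Set.univ : Set (SmallSet mu lam))) ∧
        (∀ g : Quotient.out kappa → Quotient.out lam',
          ∃ (F : Set (Quotient.out kappa)) (G : Set (Quotient.out lam)),
            F.Finite ∧ G.Finite ∧
              {s : SmallSet mu lam | G ⊆ s.val} ∩ ⋂ β ∈ F, B (g β) β = ∅)) := by
  constructor
  · rintro ⟨f, hf⟩
    refine ⟨fun α β => {s | α ∉ (f β s).val}, ?_, ?_⟩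
    · intro β H hH
      apply Set.eq_univ_of_forall
      intro s
      rw [Set.mem_iUnion₂]
      by_contra hc
      push_neg at hc
      have hsub : H ⊆ (f β s).val := fun α hα => not_not.mp (hc α hα)
      exact absurd (hH.trans (Cardinal.mk_le_mk_of_subset hsub)) (not_le.mpr (f β s).2)
    · intro g
      by_contra hcon
      push_neg at hcon
      set A : (Quotient.out lam ⊕ Quotient.out kappa) → Set (SmallSet mu lam) :=
        Sum.elim (fun α => {s : SmallSet mu lam | α ∈ s.val})
          (fun β => {s : SmallSet mu lam | g β ∉ (f β s).val}) with hA
      set Fl : Filter (SmallSet mu lam) := ⨅ i, Filter.principal (A i) with hFl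
      have hne : Fl.NeBot := by
        rw [Filter.neBot_iff]
        intro hbot
        have h0 : (∅ : Set (SmallSet mu lam)) ∈ Fl := by rw [hbot]; exact Filter.mem_bot
        rw [hFl, Filter.mem_iInf_finite] at h0
        obtain ⟨t, ht⟩ := h0
        rw [Filter.iInf_principal_finset, Filter.mem_principal] at ht
        have hempty : (⋂ i ∈ t, A i) = ∅ := Set.subset_eq_empty ht rfl
        set G : Set (Quotient.out lam) := Sum.inl ⁻¹' (↑t : Set (Quotient.out lam ⊕ Quotient.out kappa)) with hG
        set F : Set (Quotient.out kappa) := Sum.inr ⁻¹' (↑t : Set (Quotient.out lam ⊕ Quotient.out kappa)) with hFdef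
        have hGfin : G.Finite := t.finite_toSet.preimage Sum.inl_injective.injOn
        have hFfin : F.Finite := t.finite_toSet.preimage Sum.inr_injective.injOn
        obtain ⟨s, hsG, hsB⟩ := hcon F G hFfin hGfin
        have hsmem : s ∈ ⋂ i ∈ t, A i := by
          rw [Set.mem_iInter₂]
          intro i hi
          rcases i with α | β
          · exact hsG hi
          · exact Set.mem_iInter₂.mp hsB β hi
        rw [hempty] at hsmem
        exact hsmem
      set D : Ultrafilter (SmallSet mu lam) := Ultrafilter.of Fl with hD
      have hmem : ∀ i, A i ∈ D := by
        intro i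
        exact Ultrafilter.of_le Fl ((Filter.le_principal_iff.mp (iInf_le _ i)))
      have hcov : Covers D := fun α => hmem (Sum.inl α)
      obtain ⟨β, hβ⟩ := hf D hcov
      have h1 : {s : SmallSet mu lam | g β ∈ (f β s).val} ∈ D := hβ (g β)
      have h2 : {s : SmallSet mu lam | g β ∉ (f β s).val} ∈ D := hmem (Sum.inr β)
      have h3 := Filter.inter_mem h1 h2
      obtain ⟨s, hs1, hs2⟩ := D.neBot.nonempty_of_mem h3
      exact hs2 hs1
  · rintro ⟨B, hB1, hB2⟩
    have hsmall : ∀ (β : Quotient.out kappa) (s : SmallSet mu lam),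
        #{α : Quotient.out lam' | s ∉ B α β} < mu' := by
      intro β s
      by_contra hc
      push_neg at hc
      have := hB1 β _ hc
      have hs : s ∈ ⋃ α ∈ {α : Quotient.out lam' | s ∉ B α β}, B α β := by
        rw [this]; trivial
      obtain ⟨α, hα, hmem⟩ := Set.mem_iUnion₂.mp hs
      exact hα hmem
    refine ⟨fun β s => ⟨{α | s ∉ B α β}, hsmall β s⟩, ?_⟩
    intro D hcov
    by_contra hc
    push_neg at hc
    have hc' : ∀ β : Quotient.out kappa, ∃ α : Quotient.out lam',
        B α β ∈ D := by
      intro β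
      obtain ⟨α, hα⟩ := not_forall.mp (hc β)
      refine ⟨α, ?_⟩
      have : {s : SmallSet mu lam | s ∉ B α β} ∉ D := hα
      rw [← Ultrafilter.compl_mem_iff_notMem] at this
      simpa [Set.compl_setOf] using this
    choose g hg using hc'
    obtain ⟨F, G, hFfin, hGfin, hempty⟩ := hB2 g
    have hGmem : {s : SmallSet mu lam | G ⊆ s.val} ∈ D := by
      have : (⋂ α ∈ G, {s : SmallSet mu lam | α ∈ s.val}) ∈ D :=
        (Filter.biInter_mem hGfin).mpr fun α _ => hcov α
      convert this using 1
      ext s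
      simp [Set.subset_def]
    have hFmem : (⋂ β ∈ F, B (g β) β) ∈ D :=
      (Filter.biInter_mem hFfin).mpr fun β _ => hg β
    have h3 := Filter.inter_mem hGmem hFmem
    rw [hempty] at h3
    exact Ultrafilter.empty_notMem h3
end

section
/- Let κ be any cardinal and let λ ≥ μ and λ_β ≥ μ_β (for each β ∈ κ) be infinite cardinals. Then (λ,μ) ⇒ ⋁_{β∈κ}(λ_β,μ_β) holds if and only if there is a family (C_{α,β})_{α∈λ_β, β∈κ} of subsets of S_μ(λ) such that: (i) for every β ∈ κ and every H ⊆ λ_β with |H| ≥ μ_β, ⋂_{α∈H} C_{α,β} = ∅; and (ii) for every function g ∈ ∏_{β∈κ} λ_β there exist finite sets F ⊆ κ and G ⊆ λ with [G] ⊆ ⋃_{β∈F} C_{g(β),β}. -/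
open Cardinal Set

universe u

/-- The relation `(λ, μ) ⇒ ⋁_{β∈κ} (λ_β, μ_β)`: there are `κ` functions
`f_β : S_μ(λ) → S_{μ_β}(λ_β)` such that every ultrafilter covering `λ` pushes
forward, under some `f_β`, to an ultrafilter covering `λ_β`. -/
def MultiCovRel (lam mu kappa : Cardinal.{u})
    (lamb mub : Quotient.out kappa → Cardinal.{u}) : Prop :=
  ∃ f : (β : Quotient.out kappa) → SmallSet mu lam → SmallSet (mub β) (lamb β),
    ∀ D : Ultrafilter (SmallSet mu lam), Covers D →
      ∃ β : Quotient.out kappa, Covers (Ultrafilter.map (f β) D)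

/-- Theorem 6, (a) ↔ (c): the multicardinal relation holds iff there is a family `(C_{α,β})_{α∈λ_β, β∈κ}` of subsets of `S_μ(λ)` with the corresponding intersection and covering properties. -/
theorem multiCovRel_iff_interFamily (lam mu kappa : Cardinal.{u})
    (lamb mub : Quotient.out kappa → Cardinal.{u})
    (hmu : ℵ₀ ≤ mu) (hml : mu ≤ lam)
    (hmub : ∀ β, ℵ₀ ≤ mub β) (hmlb : ∀ β, mub β ≤ lamb β) :
    MultiCovRel lam mu kappa lamb mub ↔
      (∃ C : (β : Quotient.out kappa) → Quotient.out (lamb β) → Set (SmallSet mu lam),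
        (∀ β : Quotient.out kappa, ∀ H : Set (Quotient.out (lamb β)),
          mub β ≤ #H → ⋂ α ∈ H, C β α = (∅ : Set (SmallSet mu lam))) ∧
        (∀ g : (β : Quotient.out kappa) → Quotient.out (lamb β),
          ∃ (F : Set (Quotient.out kappa)) (G : Set (Quotient.out lam)),
            F.Finite ∧ G.Finite ∧
              {s : SmallSet mu lam | G ⊆ s.val} ⊆ ⋃ β ∈ F, C β (g β))) := by
  classical
  constructor
  · rintro ⟨f, hf⟩
    refine ⟨fun β α => {s | α ∈ (f β s).val}, ?_, ?_⟩
    · intro β H hH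
      ext s
      simp only [mem_iInter, mem_empty_iff_false, iff_false]
      intro h
      have hsub : H ⊆ (f β s).val := fun α hα => h α hα
      exact absurd ((f β s).2) (not_lt.mpr (hH.trans (Cardinal.mk_le_mk_of_subset hsub)))
    · intro g
      by_contra hcon
      push_neg at hcon
      set B : Finset (Quotient.out kappa) → Finset (Quotient.out lam) →
          Set (SmallSet mu lam) := fun F G =>
        {s | ∀ α ∈ G, α ∈ s.val} ∩ (⋃ β ∈ (F : Set (Quotient.out kappa)),
          {s : SmallSet mu lam | g β ∈ (f β s).val})ᶜ with hBdef
      have hBmono : ∀ F F' G G', F ⊆ F' → G ⊆ G' → B F' G' ⊆ B F G := by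
        rintro F F' G G' hFF hGG s ⟨h1, h2⟩
        refine ⟨fun α hα => h1 α (hGG hα), fun hmem => h2 ?_⟩
        simp only [Set.mem_iUnion, exists_prop] at hmem ⊢
        obtain ⟨β, hβ, hβ2⟩ := hmem
        exact ⟨β, hFF hβ, hβ2⟩
      have hBne : ∀ F G, (B F G).Nonempty := by
        intro F G
        have h := hcon (F : Set _) (G : Set _) F.finite_toSet G.finite_toSet
        rw [Set.not_subset] at h
        obtain ⟨s, hs1, hs2⟩ := h
        refine ⟨s, fun α hα => hs1 (by exact_mod_cast hα), fun hmem => hs2 ?_⟩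
        simp only [Set.mem_iUnion, exists_prop] at hmem ⊢
        obtain ⟨β, hβ, hβ2⟩ := hmem
        exact ⟨β, hβ, hβ2⟩
      set fl : Finset (Quotient.out kappa) × Finset (Quotient.out lam) →
          Filter (SmallSet mu lam) := fun p => Filter.principal (B p.1 p.2) with hfl
      have hdir : Directed (· ≥ ·) fl := by
        intro p q
        refine ⟨(p.1 ∪ q.1, p.2 ∪ q.2), ?_, ?_⟩
        · exact Filter.principal_mono.mpr
            (hBmono p.1 (p.1 ∪ q.1) p.2 (p.2 ∪ q.2) Finset.subset_union_left
              Finset.subset_union_left)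
        · exact Filter.principal_mono.mpr
            (hBmono q.1 (p.1 ∪ q.1) q.2 (p.2 ∪ q.2) Finset.subset_union_right
              Finset.subset_union_right)
      haveI : (⨅ p, fl p).NeBot :=
        Filter.iInf_neBot_of_directed' hdir
          (fun p => Filter.principal_neBot_iff.mpr (hBne p.1 p.2))
      set U : Ultrafilter (SmallSet mu lam) := Ultrafilter.of (⨅ p, fl p) with hU
      have hUle : (U : Filter (SmallSet mu lam)) ≤ ⨅ p, fl p := Ultrafilter.of_le _
      have hBU : ∀ F G, B F G ∈ U := by
        intro F G
        have h1 : (U : Filter _) ≤ fl (F, G) := hUle.trans (iInf_le fl (F, G))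
        exact h1 (Filter.mem_principal_self _)
      have hcov : Covers U := by
        intro α
        refine Filter.mem_of_superset (hBU ∅ {α}) ?_
        rintro s ⟨h1, _⟩
        exact h1 α (Finset.mem_singleton_self α)
      obtain ⟨β, hβ⟩ := hf U hcov
      have h1 : {s : SmallSet mu lam | g β ∈ (f β s).val} ∈ U := by
        have := hβ (g β)
        rwa [Ultrafilter.mem_map] at this
      have h2 : {s : SmallSet mu lam | g β ∈ (f β s).val}ᶜ ∈ U := by
        refine Filter.mem_of_superset (hBU {β} ∅) ?_
        rintro s ⟨_, h2⟩ hmem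
        refine h2 ?_
        simp only [Set.mem_iUnion, exists_prop]
        exact ⟨β, by simp, hmem⟩
      exact (Ultrafilter.compl_mem_iff_notMem.mp h2) h1
  · rintro ⟨C, hC1, hC2⟩
    have hfs : ∀ (β : Quotient.out kappa) (s : SmallSet mu lam),
        #{α | s ∈ C β α} < mub β := by
      intro β s
      by_contra h
      rw [not_lt] at h
      have := hC1 β {α | s ∈ C β α} h
      have hs : s ∈ ⋂ α ∈ {α | s ∈ C β α}, C β α := by
        simp only [mem_iInter]; exact fun α hα => hα
      rw [this] at hs
      exact hs
    refine ⟨fun β s => ⟨{α | s ∈ C β α}, hfs β s⟩, ?_⟩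
    intro D hD
    by_contra hcon
    push_neg at hcon
    have hg : ∀ β : Quotient.out kappa, ∃ α : Quotient.out (lamb β), C β α ∉ D := by
      intro β
      have := hcon β
      unfold Covers at this
      push_neg at this
      obtain ⟨α, hα⟩ := this
      refine ⟨α, fun hmem => hα ?_⟩
      rw [Ultrafilter.mem_map]
      exact hmem
    choose g hg using hg
    obtain ⟨F, G, hF, hG, hsub⟩ := hC2 g
    have hGmem : {s : SmallSet mu lam | G ⊆ s.val} ∈ D := by
      have heq : {s : SmallSet mu lam | G ⊆ s.val} =
          ⋂ α ∈ G, {s : SmallSet mu lam | α ∈ s.val} := by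
        ext s; simp [Set.subset_def]
      rw [heq, ← Ultrafilter.mem_coe, Filter.biInter_mem hG]
      exact fun α _ => hD α
    have hUnion : (⋃ β ∈ F, C β (g β)) ∈ D := Filter.mem_of_superset hGmem hsub
    have hcompl : (⋃ β ∈ F, C β (g β))ᶜ ∈ D := by
      have heq : (⋃ β ∈ F, C β (g β))ᶜ = ⋂ β ∈ F, (C β (g β))ᶜ := by
        simp [Set.compl_iUnion]
      rw [heq, ← Ultrafilter.mem_coe, Filter.biInter_mem hF]
      exact fun β hβ => (Ultrafilter.compl_mem_iff_notMem).mpr (hg β)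
    exact (Ultrafilter.compl_mem_iff_notMem).mp hcompl hUnion
end

section
/- Let λ ≥ μ and λ' ≥ μ' be infinite cardinals and κ any cardinal. Then (λ,μ) ⇒^κ almost(λ',μ') holds if and only if there are κ functions (f_β)_{β∈κ} : S_μ(λ) → S_{μ'}(λ') such that for every function g : κ → S_{λ'}(λ') there exist a finite set G ⊆ λ, a finite set F ⊆ κ, and, for each β ∈ F, a finite set H_β ⊆ λ' \ g(β), such that [G] ⊆ ⋃_{β∈F, β*∈H_β} f_β⁻¹[{s' ∈ S_{μ'}(λ') : β* ∈ s'}]. -/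
open Cardinal Set

universe u

/-- An ultrafilter `D` on `S_μ(λ)` almost covers `λ` if
`{α ∈ λ : [{α}] ∈ D}` has cardinality `λ`. -/
def AlmostCovers {mu lam : Cardinal.{u}} (D : Ultrafilter (SmallSet mu lam)) : Prop :=
  #{α : Quotient.out lam | {s : SmallSet mu lam | α ∈ s.val} ∈ D} = lam

/-- The relation `(λ, μ) ⇒^κ almost (λ', μ')`: there are `κ` functions
`f_β : S_μ(λ) → S_{μ'}(λ')` such that every ultrafilter covering `λ` pushes
forward, under some `f_β`, to an ultrafilter almost covering `λ'`. -/
def CovAlmRel (lam mu lam' mu' kappa : Cardinal.{u}) : Prop :=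
  ∃ f : Quotient.out kappa → SmallSet mu lam → SmallSet mu' lam',
    ∀ D : Ultrafilter (SmallSet mu lam), Covers D →
      ∃ β : Quotient.out kappa, AlmostCovers (Ultrafilter.map (f β) D)

/-- Theorem 8, (a) ↔ (b): `(λ,μ) ⇒^κ almost (λ',μ')` holds iff there are `κ` functions `f_β` such that for every `g : κ → S_{λ'}(λ')` there are finite `G ⊆ λ`, `F ⊆ κ` and finite `H_β ⊆ λ' \\ g(β)` for `β ∈ F` with `[G] ⊆ ⋃_{β∈F, β*∈H_β} f_β⁻¹[{β*}]`. -/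
theorem covAlmRel_iff_funs (lam mu lam' mu' kappa : Cardinal.{u})
    (hmu : ℵ₀ ≤ mu) (hml : mu ≤ lam) (hmu' : ℵ₀ ≤ mu') (hml' : mu' ≤ lam') :
    CovAlmRel lam mu lam' mu' kappa ↔
      (∃ f : Quotient.out kappa → SmallSet mu lam → SmallSet mu' lam',
        ∀ g : Quotient.out kappa → SmallSet lam' lam',
          ∃ (G : Set (Quotient.out lam)) (F : Set (Quotient.out kappa))
            (H : Quotient.out kappa → Set (Quotient.out lam')),
            G.Finite ∧ F.Finite ∧
            (∀ β ∈ F, (H β).Finite ∧ H β ⊆ ((g β).val)ᶜ) ∧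
              {s : SmallSet mu lam | G ⊆ s.val} ⊆
                ⋃ β ∈ F, ⋃ b ∈ H β,
                  f β ⁻¹' {s' : SmallSet mu' lam' | b ∈ s'.val}) := by
  constructor
  · rintro ⟨f, hf⟩
    refine ⟨f, fun g => ?_⟩
    by_contra hcon
    push_neg at hcon
    let h : Quotient.out lam ⊕
        (Σ β : Quotient.out kappa, {b : Quotient.out lam' // b ∉ (g β).val}) →
        Set (SmallSet mu lam) := fun i =>
      match i with
      | Sum.inl α => {s | α ∈ s.val}
      | Sum.inr p => {s | (p.2 : Quotient.out lam') ∉ (f p.1 s).val}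
    have hNB : Filter.NeBot (Filter.generate (Set.range h)) := by
      rw [Filter.generate_neBot_iff]
      intro t hts htf
      have hch : ∀ u : t, ∃ i, h i = (u : Set (SmallSet mu lam)) := fun u => hts u.2
      choose φ hφ using hch
      haveI := htf.to_subtype
      have hI₀ : (Set.range φ).Finite := Set.finite_range φ
      set G : Set (Quotient.out lam) := Sum.inl ⁻¹' (Set.range φ) with hGdef
      set F : Set (Quotient.out kappa) :=
        Sigma.fst '' (Sum.inr ⁻¹' (Set.range φ)) with hFdef
      set H : Quotient.out kappa → Set (Quotient.out lam') := fun β =>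
        {b | ∃ hb : b ∉ (g β).val, Sum.inr ⟨β, ⟨b, hb⟩⟩ ∈ Set.range φ} with hHdef
      have hGf : G.Finite := hI₀.preimage Sum.inl_injective.injOn
      have hinr : (Sum.inr ⁻¹' (Set.range φ) :
          Set (Σ β : Quotient.out kappa, {b : Quotient.out lam' // b ∉ (g β).val})).Finite :=
        hI₀.preimage Sum.inr_injective.injOn
      have hFf : F.Finite := hinr.image _
      have hHf : ∀ β, (H β).Finite := by
        intro β
        apply (hinr.image (fun p => (p.2 : Quotient.out lam'))).subset
        rintro b ⟨hb, hmem⟩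
        exact ⟨⟨β, ⟨b, hb⟩⟩, hmem, rfl⟩
      obtain ⟨s, hsG, hsU⟩ := Set.not_subset.mp
        (hcon G F H hGf hFf (fun β _ => ⟨hHf β, fun b hb => hb.1⟩))
      simp only [Set.mem_iUnion, not_exists] at hsU
      refine ⟨s, fun u hu => ?_⟩
      have hu' : h (φ ⟨u, hu⟩) = u := hφ ⟨u, hu⟩
      rw [← hu']
      have hiI₀ : φ ⟨u, hu⟩ ∈ Set.range φ := Set.mem_range_self _
      rcases hi : φ ⟨u, hu⟩ with α | p
      · rw [hi] at hiI₀
        exact hsG hiI₀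
      · rw [hi] at hiI₀
        have hβF : p.1 ∈ F := ⟨p, hiI₀, rfl⟩
        have hbH : (p.2 : Quotient.out lam') ∈ H p.1 := ⟨p.2.2, by
          convert hiI₀⟩
        intro hbf
        exact hsU p.1 hβF p.2 hbH hbf
    letI := hNB
    set D : Ultrafilter (SmallSet mu lam) :=
      Ultrafilter.of (Filter.generate (Set.range h)) with hDdef
    have hle : (D : Filter (SmallSet mu lam)) ≤ Filter.generate (Set.range h) :=
      Ultrafilter.of_le _
    have hmemD : ∀ i, h i ∈ D := fun i =>
      hle (Filter.mem_generate_of_mem ⟨i, rfl⟩)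
    have hcov : Covers D := fun α => hmemD (Sum.inl α)
    obtain ⟨β, hβ⟩ := hf D hcov
    have hβ' : #{b : Quotient.out lam' |
        {s' : SmallSet mu' lam' | b ∈ s'.val} ∈ Ultrafilter.map (f β) D} = lam' := hβ
    have hsub : {b : Quotient.out lam' |
        {s' : SmallSet mu' lam' | b ∈ s'.val} ∈ Ultrafilter.map (f β) D} ⊆ (g β).val := by
      intro b hb
      by_contra hbg
      have h1 : {s | b ∉ ((f β s).val : Set (Quotient.out lam'))} ∈ D :=
        hmemD (Sum.inr ⟨β, ⟨b, hbg⟩⟩)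
      rw [Set.mem_setOf_eq, Ultrafilter.mem_map] at hb
      have h2 : (f β ⁻¹' {s' : SmallSet mu' lam' | b ∈ s'.val})ᶜ ∈ D := h1
      exact (Ultrafilter.compl_mem_iff_notMem.mp h2) hb
    have hle' := Cardinal.mk_le_mk_of_subset hsub
    rw [hβ'] at hle'
    exact absurd (hle'.trans_lt (g β).2) (lt_irrefl _)
  · rintro ⟨f, hf⟩
    refine ⟨f, fun D hD => ?_⟩
    by_contra hcon
    push_neg at hcon
    have hA : ∀ β, #{b : Quotient.out lam' |
        {s' : SmallSet mu' lam' | b ∈ s'.val} ∈ Ultrafilter.map (f β) D} < lam' := by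
      intro β
      refine lt_of_le_of_ne ?_ (hcon β)
      calc #{b : Quotient.out lam' |
            {s' : SmallSet mu' lam' | b ∈ s'.val} ∈ Ultrafilter.map (f β) D}
          ≤ #(Quotient.out lam') := Cardinal.mk_set_le _
        _ = lam' := Cardinal.mk_out lam'
    obtain ⟨G, F, H, hGf, hFf, hH, hsub⟩ := hf (fun β => ⟨_, hA β⟩)
    have hGD : {s : SmallSet mu lam | G ⊆ s.val} ∈ D := by
      have heq : {s : SmallSet mu lam | G ⊆ s.val} =
          ⋂ α ∈ G, {s : SmallSet mu lam | α ∈ s.val} := by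
        ext s; simp [Set.subset_def]
      rw [heq]
      exact (Filter.biInter_mem hGf).mpr fun α _ => hD α
    have hUD : (⋃ β ∈ F, ⋃ b ∈ H β,
        f β ⁻¹' {s' : SmallSet mu' lam' | b ∈ s'.val}) ∈ D :=
      Filter.mem_of_superset hGD hsub
    obtain ⟨β, hβF, hβ⟩ := (Ultrafilter.finite_biUnion_mem_iff hFf).mp hUD
    obtain ⟨b, hbH, hb⟩ := (Ultrafilter.finite_biUnion_mem_iff (hH β hβF).1).mp hβ
    exact (hH β hβF).2 hbH (by rw [← Ultrafilter.mem_map] at hb; exact hb)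
end

section
/- Let λ ≥ μ and λ' ≥ μ' be infinite cardinals and κ any cardinal. Then (λ,μ) ⇒^κ almost(λ',μ') holds if and only if there is a family (C_{α,β})_{α∈λ', β∈κ} of subsets of S_μ(λ) such that: (i) for every β ∈ κ and every H ⊆ λ' with |H| ≥ μ', ⋂_{α∈H} C_{α,β} = ∅; and (ii) for every function g : κ → S_{λ'}(λ') there exist a finite set G ⊆ λ, a finite set F ⊆ κ, and, for each β ∈ F, a finite set H_β ⊆ λ' \ g(β), such that [G] ⊆ ⋃_{β∈F, β*∈H_β} C_{β*,β}. -/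
open Cardinal Set

universe u

/-- Theorem 8, (a) ↔ (c): `(λ,μ) ⇒^κ almost (λ',μ')` holds iff there is a family `(C_{α,β})` with the corresponding intersection and covering properties. -/
theorem covAlmRel_iff_interFamily (lam mu lam' mu' kappa : Cardinal.{u})
    (hmu : ℵ₀ ≤ mu) (hml : mu ≤ lam) (hmu' : ℵ₀ ≤ mu') (hml' : mu' ≤ lam') :
    CovAlmRel lam mu lam' mu' kappa ↔
      (∃ C : Quotient.out lam' → Quotient.out kappa → Set (SmallSet mu lam),
        (∀ β : Quotient.out kappa, ∀ H : Set (Quotient.out lam'),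
          mu' ≤ #H → ⋂ α ∈ H, C α β = (∅ : Set (SmallSet mu lam))) ∧
        (∀ g : Quotient.out kappa → SmallSet lam' lam',
          ∃ (G : Set (Quotient.out lam)) (F : Set (Quotient.out kappa))
            (H : Quotient.out kappa → Set (Quotient.out lam')),
            G.Finite ∧ F.Finite ∧
            (∀ β ∈ F, (H β).Finite ∧ H β ⊆ ((g β).val)ᶜ) ∧
              {s : SmallSet mu lam | G ⊆ s.val} ⊆
                ⋃ β ∈ F, ⋃ b ∈ H β, C b β)) := by
  constructor
  · -- forward direction
    rintro ⟨f, hf⟩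
    refine ⟨fun α β => {s | α ∈ (f β s).val}, ?_, ?_⟩
    · intro β H hH
      ext s
      simp only [mem_iInter, mem_setOf_eq, mem_empty_iff_false, iff_false]
      intro hs
      have h1 : #H ≤ #((f β s).val) :=
        Cardinal.mk_le_mk_of_subset (fun α hα => hs α hα)
      exact absurd (hH.trans h1) (not_le.mpr (f β s).2)
    · intro g
      by_contra hno
      -- the generating family
      set S : Set (Set (SmallSet mu lam)) :=
        {t | ∃ α : Quotient.out lam, t = {s : SmallSet mu lam | α ∈ s.val}} ∪
        {t | ∃ β b, b ∉ (g β).val ∧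
          t = {s : SmallSet mu lam | b ∈ (f β s).val}ᶜ} with hSdef
      have hne : ∀ u ⊆ S, u.Finite → (⋂₀ u).Nonempty := by
        intro u hu hufin
        by_contra hE
        rw [Set.not_nonempty_iff_eq_empty] at hE
        apply hno
        -- extract G, F, H from u
        have hconeinj : Function.Injective
            (fun α : Quotient.out lam => {s : SmallSet mu lam | α ∈ s.val}) := by
          intro α α' h
          have hsmall : #({α} : Set (Quotient.out lam)) < mu := by
            rw [Cardinal.mk_singleton]
            exact lt_of_lt_of_le Cardinal.one_lt_aleph0 hmu
          have : (⟨{α}, hsmall⟩ : SmallSet mu lam) ∈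
              {s : SmallSet mu lam | α ∈ s.val} := by simp
          have h' : {s : SmallSet mu lam | α ∈ s.val} = {s : SmallSet mu lam | α' ∈ s.val} := h
          rw [h'] at this
          have : α' ∈ ({α} : Set (Quotient.out lam)) := this
          exact (Set.mem_singleton_iff.mp this).symm
        set T : Set (Set (SmallSet mu lam)) :=
          u ∩ {t | ∃ β b, b ∉ (g β).val ∧
            t = {s : SmallSet mu lam | b ∈ (f β s).val}ᶜ} with hTdef
        haveI hTfin : Finite T := (hufin.subset Set.inter_subset_left).to_subtype
        have hTspec : ∀ t : T, ∃ β b, b ∉ (g β).val ∧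
            (t : Set (SmallSet mu lam)) = {s : SmallSet mu lam | b ∈ (f β s).val}ᶜ :=
          fun t => t.2.2
        set wβ : T → Quotient.out kappa := fun t => (hTspec t).choose with hwβ
        set wb : T → Quotient.out lam' := fun t => (hTspec t).choose_spec.choose with hwb
        have hw : ∀ t : T, wb t ∉ (g (wβ t)).val ∧
            (t : Set (SmallSet mu lam)) =
              {s : SmallSet mu lam | wb t ∈ (f (wβ t) s).val}ᶜ :=
          fun t => (hTspec t).choose_spec.choose_spec
        refine ⟨{α | {s : SmallSet mu lam | α ∈ s.val} ∈ u}, Set.range wβ,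
          fun β => wb '' {t : T | wβ t = β}, ?_, Set.finite_range wβ, ?_, ?_⟩
        · -- G finite
          have : {α | {s : SmallSet mu lam | α ∈ s.val} ∈ u} =
              (fun α : Quotient.out lam => {s : SmallSet mu lam | α ∈ s.val}) ⁻¹' u := rfl
          rw [this]
          exact hufin.preimage hconeinj.injOn
        · rintro β -
          refine ⟨(Set.toFinite _).image wb, ?_⟩
          rintro b ⟨t, ht, rfl⟩
          have := (hw t).1
          rw [ht] at this
          exact this
        · intro s hs
          have hsnot : s ∉ ⋂₀ u := by rw [hE]; exact Set.notMem_empty s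
          simp only [Set.mem_sInter, not_forall] at hsnot
          obtain ⟨t, htu, hst⟩ := hsnot
          rcases hu htu with h1 | h2
          · obtain ⟨α, rfl⟩ := h1
            exact absurd (hs htu) hst
          · have htT : t ∈ T := ⟨htu, h2⟩
            have hspec := hw ⟨t, htT⟩
            rw [show t = {s : SmallSet mu lam | wb ⟨t, htT⟩ ∈ (f (wβ ⟨t, htT⟩) s).val}ᶜ
              from hspec.2] at hst
            simp only [Set.mem_compl_iff, not_not] at hst
            refine Set.mem_biUnion (Set.mem_range_self (⟨t, htT⟩ : T)) ?_
            exact Set.mem_biUnion ⟨⟨t, htT⟩, rfl, rfl⟩ hst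
      haveI hNB : (Filter.generate S).NeBot := Filter.generate_neBot_iff.mpr hne
      set D := Ultrafilter.of (Filter.generate S) with hDdef
      have hcov : Covers D := fun α =>
        Ultrafilter.of_le _ (Filter.mem_generate_of_mem (Or.inl ⟨α, rfl⟩))
      obtain ⟨β, hβ⟩ := hf D hcov
      unfold AlmostCovers at hβ
      have hsub : {α | {s' : SmallSet mu' lam' | α ∈ s'.val} ∈
          Ultrafilter.map (f β) D} ⊆ (g β).val := by
        intro b hb
        by_contra hbg
        have h1 : {s : SmallSet mu lam | b ∈ (f β s).val}ᶜ ∈ D :=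
          Ultrafilter.of_le _ (Filter.mem_generate_of_mem (Or.inr ⟨β, b, hbg, rfl⟩))
        have h2 : {s : SmallSet mu lam | b ∈ (f β s).val} ∈ D := by
          have := (Ultrafilter.mem_map).mp hb
          simpa [Set.preimage_setOf_eq] using this
        exact (Ultrafilter.compl_mem_iff_notMem.mp h1) h2
      have hle : lam' ≤ #((g β).val) := by
        calc lam' = _ := hβ.symm
          _ ≤ #((g β).val) := Cardinal.mk_le_mk_of_subset hsub
      exact absurd (hle.trans_lt (g β).2) (lt_irrefl _)
  · -- reverse direction
    rintro ⟨C, hC1, hC2⟩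
    have hsmall : ∀ β s, #{α | s ∈ C α β} < mu' := by
      intro β s
      by_contra h
      push_neg at h
      have hmem : s ∈ ⋂ α ∈ {α | s ∈ C α β}, C α β :=
        Set.mem_biInter fun α hα => hα
      rw [hC1 β _ h] at hmem
      exact hmem
    refine ⟨fun β s => ⟨{α | s ∈ C α β}, hsmall β s⟩, ?_⟩
    intro D hD
    by_contra hno
    push_neg at hno
    have hmap : ∀ β α, ({s' : SmallSet mu' lam' | α ∈ s'.val} ∈
        Ultrafilter.map (fun s => (⟨{α | s ∈ C α β}, hsmall β s⟩ : SmallSet mu' lam')) D)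
        ↔ C α β ∈ D := by
      intro β α
      rw [Ultrafilter.mem_map]
      simp only [Set.preimage_setOf_eq, Set.mem_setOf_eq, Set.setOf_mem_eq]
    have hA : ∀ β, #{α | C α β ∈ D} < lam' := by
      intro β
      refine lt_of_le_of_ne ?_ ?_
      · calc #{α | C α β ∈ D} ≤ #(Quotient.out lam') := Cardinal.mk_set_le _
          _ = lam' := Cardinal.mk_out lam'
      · intro h
        apply hno β
        unfold AlmostCovers
        have hset : {α | {s' : SmallSet mu' lam' | α ∈ s'.val} ∈
            Ultrafilter.map (fun s => (⟨{α | s ∈ C α β}, hsmall β s⟩ : SmallSet mu' lam')) D}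
            = {α | C α β ∈ D} := by
          ext α; exact hmap β α
        rw [hset]
        exact h
    obtain ⟨G, F, H, hGf, hFf, hH, hcov⟩ := hC2 (fun β => ⟨{α | C α β ∈ D}, hA β⟩)
    have hGD : {s : SmallSet mu lam | G ⊆ s.val} ∈ D := by
      have heq : {s : SmallSet mu lam | G ⊆ s.val} =
          ⋂ α ∈ G, {s : SmallSet mu lam | α ∈ s.val} := by
        ext s; simp [Set.subset_def]
      rw [heq]
      exact (Filter.biInter_mem hGf).mpr fun α _ => hD α
    have hUD : (⋃ β ∈ F, ⋃ b ∈ H β, C b β) ∈ D := Filter.mem_of_superset hGD hcov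
    obtain ⟨β, hβF, h2⟩ := (Ultrafilter.finite_biUnion_mem_iff hFf).mp hUD
    obtain ⟨b, hbH, h3⟩ := (Ultrafilter.finite_biUnion_mem_iff (hH β hβF).1).mp h2
    exact (hH β hβF).2 hbH h3
end

section
/- Let λ ≥ μ and λ' ≥ μ' be infinite cardinals and κ any cardinal. Then almost(λ,μ) ⇒^κ (λ',μ') holds if and only if there are κ functions (f_β)_{β∈κ} : S_μ(λ) → S_{μ'}(λ') such that for every T ⊆ λ with |T| = λ and every function g : κ → λ' there exist finite sets F ⊆ κ and G ⊆ T with [G] ⊆ ⋃_{β∈F} f_β⁻¹[{s' ∈ S_{μ'}(λ') : g(β) ∈ s'}]. -/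
open Cardinal Set

universe u

/-- The relation `almost (λ, μ) ⇒^κ (λ', μ')`: there are `κ` functions
`f_β : S_μ(λ) → S_{μ'}(λ')` such that every ultrafilter almost covering `λ`
pushes forward, under some `f_β`, to an ultrafilter covering `λ'`. -/
def AlmCovRel (lam mu lam' mu' kappa : Cardinal.{u}) : Prop :=
  ∃ f : Quotient.out kappa → SmallSet mu lam → SmallSet mu' lam',
    ∀ D : Ultrafilter (SmallSet mu lam), AlmostCovers D →
      ∃ β : Quotient.out kappa, Covers (Ultrafilter.map (f β) D)

/-- Theorem 9, (a) ↔ (b): `almost (λ,μ) ⇒^κ (λ',μ')` holds iff there are `κ` functions `f_β` such that for every `T ⊆ λ` with `|T| = λ` and every `g : κ → λ'` there are finite `F ⊆ κ`, `G ⊆ T` with `[G] ⊆ ⋃_{β∈F} f_β⁻¹[{g(β)}]`. -/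
theorem almCovRel_iff_funs (lam mu lam' mu' kappa : Cardinal.{u})
    (hmu : ℵ₀ ≤ mu) (hml : mu ≤ lam) (hmu' : ℵ₀ ≤ mu') (hml' : mu' ≤ lam') :
    AlmCovRel lam mu lam' mu' kappa ↔
      (∃ f : Quotient.out kappa → SmallSet mu lam → SmallSet mu' lam',
        ∀ T : Set (Quotient.out lam), #T = lam →
          ∀ g : Quotient.out kappa → Quotient.out lam',
            ∃ (F : Set (Quotient.out kappa)) (G : Set (Quotient.out lam)),
              F.Finite ∧ G.Finite ∧ G ⊆ T ∧
                {s : SmallSet mu lam | G ⊆ s.val} ⊆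
                  ⋃ β ∈ F, f β ⁻¹' {s' : SmallSet mu' lam' | g β ∈ s'.val}) := by
  constructor
  · rintro ⟨f, hf⟩
    refine ⟨f, fun T hT g => ?_⟩
    by_contra hcon
    push_neg at hcon
    -- the family: cones over elements of T, and complements of the preimage sets
    set cone : Quotient.out lam → Set (SmallSet mu lam) :=
      fun α => {s | α ∈ s.val} with hcone
    set C : Quotient.out kappa → Set (SmallSet mu lam) :=
      fun β => (f β ⁻¹' {s' : SmallSet mu' lam' | g β ∈ s'.val})ᶜ with hC
    set A : Set (Set (SmallSet mu lam)) := (cone '' T) ∪ (Set.range C) with hA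
    -- the finite intersection property
    have hFIP : ∀ t, t ⊆ A → t.Finite → (⋂₀ t).Nonempty := by
      intro t htA htfin
      have h1 : t ∩ (cone '' T) ⊆ cone '' T := Set.inter_subset_right
      obtain ⟨G, hGT, hGfin, hGim⟩ :=
        Set.exists_subset_image_finite_and.mp
          ⟨t ∩ (cone '' T), h1, htfin.subset Set.inter_subset_left, rfl⟩
      have h2 : t \ (cone '' T) ⊆ Set.range C := by
        intro u hu
        rcases htA hu.1 with h | h
        · exact absurd h hu.2
        · exact h
      obtain ⟨F, hFfin, hFim⟩ : ∃ F : Set (Quotient.out kappa), F.Finite ∧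
          t \ (cone '' T) ⊆ C '' F := by
        have : ∀ u ∈ t \ (cone '' T), ∃ β, C β = u := fun u hu => h2 hu
        choose b hb using this
        refine ⟨{β | ∃ u, ∃ hu : u ∈ t \ (cone '' T), b u hu = β}, ?_, ?_⟩
        · haveI : Finite ↑(t \ cone '' T) := (htfin.subset Set.diff_subset).to_subtype
          have hss : {β | ∃ u, ∃ hu : u ∈ t \ (cone '' T), b u hu = β} ⊆
              (fun p : {u // u ∈ t \ (cone '' T)} => b p.1 p.2) '' Set.univ := by
            rintro β ⟨u, hu, rfl⟩
            exact ⟨⟨u, hu⟩, trivial, rfl⟩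
          exact ((Set.finite_univ.image _)).subset hss
        · intro u hu
          exact ⟨b u hu, ⟨u, hu, rfl⟩, hb u hu⟩
      obtain ⟨s, hsG, hsU⟩ : ∃ s : SmallSet mu lam, G ⊆ s.val ∧
          s ∉ ⋃ β ∈ F, f β ⁻¹' {s' : SmallSet mu' lam' | g β ∈ s'.val} := by
        have := hcon F G hFfin hGfin hGT
        rw [Set.not_subset] at this
        obtain ⟨s, hs1, hs2⟩ := this
        exact ⟨s, hs1, hs2⟩
      refine ⟨s, fun u hu => ?_⟩
      by_cases hu' : u ∈ cone '' T
      · obtain ⟨α, hα, rfl⟩ : ∃ α ∈ G, cone α = u := by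
          have : u ∈ cone '' G := hGim ▸ ⟨hu, hu'⟩
          obtain ⟨α, hα, rfl⟩ := this
          exact ⟨α, hα, rfl⟩
        exact hsG hα
      · obtain ⟨β, hβF, rfl⟩ := hFim ⟨hu, hu'⟩
        simp only [Set.mem_iUnion] at hsU
        exact fun hmem => hsU ⟨β, hβF, hmem⟩
    have hne : (Filter.generate A).NeBot := Filter.generate_neBot_iff.mpr hFIP
    obtain ⟨D, hD⟩ := Ultrafilter.exists_le (Filter.generate A)
    have hmemD : ∀ a ∈ A, a ∈ D := fun a ha => hD (Filter.mem_generate_of_mem ha)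
    -- D almost covers
    have halm : AlmostCovers D := by
      have hsub : T ⊆ {α : Quotient.out lam | {s : SmallSet mu lam | α ∈ s.val} ∈ D} :=
        fun α hα => hmemD _ (Set.mem_union_left _ ⟨α, hα, rfl⟩)
      refine le_antisymm ?_ ?_
      · exact (Cardinal.mk_set_le _).trans_eq (Cardinal.mk_out lam)
      · calc lam = #T := hT.symm
          _ ≤ _ := Cardinal.mk_le_mk_of_subset hsub
    obtain ⟨β, hβ⟩ := hf D halm
    have h1 : f β ⁻¹' {s' : SmallSet mu' lam' | g β ∈ s'.val} ∈ D :=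
      Ultrafilter.mem_map.mp (hβ (g β))
    have h2 : (f β ⁻¹' {s' : SmallSet mu' lam' | g β ∈ s'.val})ᶜ ∈ D :=
      hmemD _ (Set.mem_union_right _ ⟨β, rfl⟩)
    exact (Ultrafilter.compl_mem_iff_notMem.mp h2) h1
  · rintro ⟨f, hf⟩
    refine ⟨f, fun D hD => ?_⟩
    by_contra hcon
    push_neg at hcon
    have : ∀ β, ∃ α : Quotient.out lam',
        {s' : SmallSet mu' lam' | α ∈ s'.val} ∉ Ultrafilter.map (f β) D := by
      intro β
      have := hcon β
      unfold Covers at this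
      push_neg at this
      exact this
    choose g hg using this
    obtain ⟨F, G, hFfin, hGfin, hGT, hsub⟩ := hf _ hD g
    have hG : {s : SmallSet mu lam | G ⊆ s.val} ∈ D := by
      have heq : {s : SmallSet mu lam | G ⊆ s.val} =
          ⋂ α ∈ G, {s : SmallSet mu lam | α ∈ s.val} := by
        ext s; simp [Set.subset_def]
      rw [heq]
      exact (Filter.biInter_mem hGfin).mpr fun α hα => hGT hα
    have hU : (⋃ β ∈ F, f β ⁻¹' {s' : SmallSet mu' lam' | g β ∈ s'.val}) ∈ D :=
      Filter.mem_of_superset hG hsub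
    obtain ⟨β, hβF, hβ⟩ := (Ultrafilter.finite_biUnion_mem_iff hFfin).mp hU
    exact hg β (Ultrafilter.mem_map.mpr hβ)
end

section
/- Let λ ≥ μ and λ' ≥ μ' be infinite cardinals and κ any cardinal. Then almost(λ,μ) ⇒^κ (λ',μ') holds if and only if there is a family (C_{α,β})_{α∈λ', β∈κ} of subsets of S_μ(λ) such that: (i) for every β ∈ κ and every H ⊆ λ' with |H| ≥ μ', ⋂_{α∈H} C_{α,β} = ∅; and (ii) for every function g : κ → λ' and every T ⊆ λ with |T| = λ there exist finite sets F ⊆ κ and G ⊆ T such that [G] ⊆ ⋃_{β∈F} C_{g(β),β}. -/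
open Cardinal Set

universe u

/-- Theorem 9, (a) ↔ (c): `almost (λ,μ) ⇒^κ (λ',μ')` holds iff there is a family `(C_{α,β})` with the corresponding intersection and covering properties. -/
theorem almCovRel_iff_interFamily (lam mu lam' mu' kappa : Cardinal.{u})
    (hmu : ℵ₀ ≤ mu) (hml : mu ≤ lam) (hmu' : ℵ₀ ≤ mu') (hml' : mu' ≤ lam') :
    AlmCovRel lam mu lam' mu' kappa ↔
      (∃ C : Quotient.out lam' → Quotient.out kappa → Set (SmallSet mu lam),
        (∀ β : Quotient.out kappa, ∀ H : Set (Quotient.out lam'),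
          mu' ≤ #H → ⋂ α ∈ H, C α β = (∅ : Set (SmallSet mu lam))) ∧
        (∀ g : Quotient.out kappa → Quotient.out lam',
          ∀ T : Set (Quotient.out lam), #T = lam →
            ∃ (F : Set (Quotient.out kappa)) (G : Set (Quotient.out lam)),
              F.Finite ∧ G.Finite ∧ G ⊆ T ∧
                {s : SmallSet mu lam | G ⊆ s.val} ⊆ ⋃ β ∈ F, C (g β) β)) := by
  constructor
  · -- forward direction
    rintro ⟨f, hf⟩
    refine ⟨fun α β => {s | α ∈ (f β s).val}, ?_, ?_⟩
    · intro β H hH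
      rw [Set.eq_empty_iff_forall_notMem]
      intro s hs
      simp only [Set.mem_iInter] at hs
      have hle : #H ≤ #((f β s).val) :=
        Cardinal.mk_le_mk_of_subset (fun α hα => hs α hα)
      exact absurd ((hH.trans hle).trans_lt (f β s).prop) (lt_irrefl _)
    · intro g T hT
      by_contra hcon
      push_neg at hcon
      -- build a filter from the cones over finite subsets of T together
      -- with complements of the sets C (g β) β
      set A : Finset (Quotient.out kappa) × Finset (Quotient.out lam) →
          Set (SmallSet mu lam) := fun p =>
        {s | ∀ α ∈ p.2, α ∈ T → α ∈ s.val} ∩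
          ⋂ β ∈ (p.1 : Set (Quotient.out kappa)), {s | g β ∈ (f β s).val}ᶜ with hA
      have hAne : ∀ p, (A p).Nonempty := by
        intro p
        have h := hcon (↑p.1) (↑p.2 ∩ T) p.1.finite_toSet
          ((p.2.finite_toSet).inter_of_left T) (Set.inter_subset_right)
        rw [Set.not_subset] at h
        obtain ⟨s, hs1, hs2⟩ := h
        refine ⟨s, ?_, ?_⟩
        · intro α hα hαT
          exact hs1 ⟨hα, hαT⟩
        · simp only [Set.mem_iInter, Set.mem_compl_iff, Set.mem_setOf_eq]
          intro β hβ hmem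
          exact hs2 (Set.mem_biUnion hβ hmem)
      have hmono : ∀ p r : Finset (Quotient.out kappa) × Finset (Quotient.out lam),
          p.1 ⊆ r.1 → p.2 ⊆ r.2 → A r ⊆ A p := by
        rintro p r h1 h2 s ⟨hs1, hs2⟩
        have hs2' := Set.mem_iInter₂.mp hs2
        exact ⟨fun α hα hαT => hs1 α (h2 hα) hαT,
          Set.mem_iInter₂.mpr fun β hβ =>
            hs2' β (Finset.mem_coe.mpr (h1 (Finset.mem_coe.mp hβ)))⟩
      have hdir : Directed (· ≥ ·) (fun p => Filter.principal (A p)) := by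
        classical
        intro p q
        exact ⟨(p.1 ∪ q.1, p.2 ∪ q.2),
          Filter.principal_mono.mpr
            (hmono p _ Finset.subset_union_left Finset.subset_union_left),
          Filter.principal_mono.mpr
            (hmono q _ Finset.subset_union_right Finset.subset_union_right)⟩
      have hne : Nonempty (SmallSet mu lam) :=
        ⟨⟨∅, by simpa using lt_of_lt_of_le Cardinal.aleph0_pos hmu⟩⟩
      have hLne : (⨅ p, Filter.principal (A p)).NeBot :=
        Filter.iInf_neBot_of_directed hdir
          (fun p => Filter.principal_neBot_iff.mpr (hAne p))
      obtain ⟨D, hD⟩ := Ultrafilter.exists_le (⨅ p, Filter.principal (A p))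
      have memD : ∀ p, A p ∈ D := fun p =>
        hD (Filter.mem_iInf_of_mem p (Filter.mem_principal_self _))
      have hTsub : T ⊆ {α | {s : SmallSet mu lam | α ∈ s.val} ∈ D} := by
        intro α hαT
        refine D.toFilter.mem_of_superset (memD (∅, {α})) ?_
        rintro s ⟨hs1, _⟩
        exact hs1 α (Finset.mem_singleton_self α) hαT
      have hAC : AlmostCovers D := by
        refine le_antisymm ((Cardinal.mk_set_le _).trans_eq (Cardinal.mk_out lam)) ?_
        calc lam = #T := hT.symm
          _ ≤ _ := Cardinal.mk_le_mk_of_subset hTsub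
      obtain ⟨β, hβ⟩ := hf D hAC
      have hCm : {s : SmallSet mu lam | g β ∈ (f β s).val} ∈ D := by
        have := hβ (g β)
        rwa [Ultrafilter.mem_map] at this
      have hCc : {s : SmallSet mu lam | g β ∈ (f β s).val}ᶜ ∈ D := by
        refine D.toFilter.mem_of_superset (memD ({β}, ∅)) ?_
        rintro s ⟨_, hs2⟩
        simp only [Set.mem_iInter, Finset.coe_singleton, Set.mem_singleton_iff] at hs2
        exact hs2 β rfl
      exact (Ultrafilter.compl_mem_iff_notMem.mp hCc) hCm
  · -- reverse direction
    rintro ⟨C, h1, h2⟩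
    have hcard : ∀ β s, #{α | s ∈ C α β} < mu' := by
      intro β s
      by_contra h
      rw [not_lt] at h
      have hempty := h1 β _ h
      have hs : s ∈ ⋂ α ∈ {α | s ∈ C α β}, C α β :=
        Set.mem_iInter₂.mpr fun α hα => hα
      rw [hempty] at hs
      exact hs
    refine ⟨fun β s => ⟨{α | s ∈ C α β}, hcard β s⟩, ?_⟩
    intro D hD
    by_contra hcon
    push_neg at hcon
    have hg : ∀ β, ∃ α, C α β ∉ D := by
      intro β
      obtain ⟨α, hα⟩ := not_forall.mp (hcon β)
      refine ⟨α, fun h => hα ?_⟩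
      rw [Ultrafilter.mem_map]
      exact h
    choose g hg' using hg
    obtain ⟨F, G, hF, hG, hGT, hsub⟩ :=
      h2 g {α | {s : SmallSet mu lam | α ∈ s.val} ∈ D} hD
    have hGD : {s : SmallSet mu lam | G ⊆ s.val} ∈ D := by
      have heq : {s : SmallSet mu lam | G ⊆ s.val} =
          ⋂ α ∈ G, {s : SmallSet mu lam | α ∈ s.val} := by
        ext s
        simp [Set.subset_def]
      rw [heq]
      exact (Filter.biInter_mem hG).mpr fun α hα => hGT hα
    have hUD : (⋃ β ∈ F, C (g β) β) ∈ D :=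
      D.toFilter.mem_of_superset hGD hsub
    have hUc : (⋃ β ∈ F, C (g β) β)ᶜ ∈ D := by
      rw [Set.compl_iUnion₂]
      exact (Filter.biInter_mem hF).mpr fun β hβ =>
        Ultrafilter.compl_mem_iff_notMem.mpr (hg' β)
    exact (Ultrafilter.compl_mem_iff_notMem.mp hUc) hUD
end

section
/- Let λ ≥ μ and λ' ≥ μ' be infinite cardinals and κ any cardinal. Then almost(λ,μ) ⇒^κ almost(λ',μ') holds if and only if there are κ functions (f_β)_{β∈κ} : S_μ(λ) → S_{μ'}(λ') such that for every T ⊆ λ with |T| = λ and every function g : κ → S_{λ'}(λ') there exist a finite set G ⊆ T, a finite set F ⊆ κ, and, for each β ∈ F, a finite set H_β ⊆ λ' \ g(β), such that [G] ⊆ ⋃_{β∈F, β*∈H_β} f_β⁻¹[{s' ∈ S_{μ'}(λ') : β* ∈ s'}]. -/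
open Cardinal Set

universe u

/-- The relation `almost (λ, μ) ⇒^κ almost (λ', μ')`: there are `κ` functions
`f_β : S_μ(λ) → S_{μ'}(λ')` such that every ultrafilter almost covering `λ`
pushes forward, under some `f_β`, to an ultrafilter almost covering `λ'`. -/
def AlmAlmRel (lam mu lam' mu' kappa : Cardinal.{u}) : Prop :=
  ∃ f : Quotient.out kappa → SmallSet mu lam → SmallSet mu' lam',
    ∀ D : Ultrafilter (SmallSet mu lam), AlmostCovers D →
      ∃ β : Quotient.out kappa, AlmostCovers (Ultrafilter.map (f β) D)

/-- Theorem 10, (a) ↔ (b): `almost (λ,μ) ⇒^κ almost (λ',μ')` holds iff there are `κ` functions `f_β` such that for every `T ⊆ λ` with `|T| = λ` and every `g : κ → S_{λ'}(λ')` there are finite `G ⊆ T`, `F ⊆ κ` and finite `H_β ⊆ λ' \\ g(β)` for `β ∈ F` with `[G] ⊆ ⋃_{β∈F, β*∈H_β} f_β⁻¹[{β*}]`. -/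
theorem almAlmRel_iff_funs (lam mu lam' mu' kappa : Cardinal.{u})
    (hmu : ℵ₀ ≤ mu) (hml : mu ≤ lam) (hmu' : ℵ₀ ≤ mu') (hml' : mu' ≤ lam') :
    AlmAlmRel lam mu lam' mu' kappa ↔
      (∃ f : Quotient.out kappa → SmallSet mu lam → SmallSet mu' lam',
        ∀ T : Set (Quotient.out lam), #T = lam →
          ∀ g : Quotient.out kappa → SmallSet lam' lam',
            ∃ (G : Set (Quotient.out lam)) (F : Set (Quotient.out kappa))
              (H : Quotient.out kappa → Set (Quotient.out lam')),
              G.Finite ∧ G ⊆ T ∧ F.Finite ∧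
              (∀ β ∈ F, (H β).Finite ∧ H β ⊆ ((g β).val)ᶜ) ∧
                {s : SmallSet mu lam | G ⊆ s.val} ⊆
                  ⋃ β ∈ F, ⋃ b ∈ H β,
                    f β ⁻¹' {s' : SmallSet mu' lam' | b ∈ s'.val}) := by
  constructor
  · rintro ⟨f, hf⟩
    refine ⟨f, fun T hT g => ?_⟩
    by_contra hcon
    push_neg at hcon
    -- index type for the generating family
    let I : Type u := ↥T ⊕ (Σ β : Quotient.out kappa, ↥(((g β).val)ᶜ))
    let sfun : I → Set (SmallSet mu lam) := fun i =>
      match i with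
      | .inl a => {s : SmallSet mu lam | a.val ∈ s.val}
      | .inr p => (f p.1 ⁻¹' {s' : SmallSet mu' lam' | p.2.val ∈ s'.val})ᶜ
    -- finite intersection property
    have hfip : ∀ t ⊆ Set.range sfun, t.Finite → (⋂₀ t).Nonempty := by
      intro t hts htfin
      -- choose indices
      have hch : ∀ x : ↥t, ∃ i : I, sfun i = x.val := fun x => hts x.2
      choose ch hchspec using hch
      haveI : Finite ↥t := htfin.to_subtype
      set J : Set I := Set.range ch with hJ
      have hJfin : J.Finite := Set.finite_range ch
      -- build G, F, H from J
      let G : Set (Quotient.out lam) := Subtype.val '' (Sum.inl ⁻¹' J)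
      let F : Set (Quotient.out kappa) :=
        (fun p : Σ β : Quotient.out kappa, ↥(((g β).val)ᶜ) => p.1) '' (Sum.inr ⁻¹' J)
      let H : Quotient.out kappa → Set (Quotient.out lam') := fun β =>
        Subtype.val '' {x : ↥(((g β).val)ᶜ) | Sum.inr ⟨β, x⟩ ∈ J}
      have hGfin : G.Finite :=
        (hJfin.preimage (Sum.inl_injective.injOn)).image _
      have hGT : G ⊆ T := by rintro _ ⟨⟨α, hα⟩, -, rfl⟩; exact hα
      have hFfin : F.Finite :=
        (hJfin.preimage (Sum.inr_injective.injOn)).image _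
      have hH : ∀ β ∈ F, (H β).Finite ∧ H β ⊆ ((g β).val)ᶜ := by
        intro β _
        constructor
        · have : {x : ↥(((g β).val)ᶜ) | Sum.inr ⟨β, x⟩ ∈ J}.Finite := by
            have : ((fun x : ↥(((g β).val)ᶜ) => (Sum.inr ⟨β, x⟩ : I)) ⁻¹' J).Finite := by
              refine hJfin.preimage ?_
              intro x _ y _ hxy
              exact eq_of_heq ((Sigma.mk.inj_iff.1 (Sum.inr_injective hxy)).2)
            exact this
          exact this.image _
        · rintro _ ⟨⟨b, hb⟩, -, rfl⟩; exact hb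
      have hns := hcon G F H hGfin hGT hFfin hH
      rw [Set.not_subset] at hns
      obtain ⟨s, hGs, hsnot⟩ := hns
      refine ⟨s, ?_⟩
      rintro u hu
      obtain ⟨i, hiJ, hi⟩ : ∃ i ∈ J, sfun i = u :=
        ⟨ch ⟨u, hu⟩, ⟨⟨u, hu⟩, rfl⟩, hchspec ⟨u, hu⟩⟩
      rw [← hi]
      rcases i with a | ⟨β, bb⟩
      · exact hGs ⟨a, hiJ, rfl⟩
      · intro hmem
        apply hsnot
        refine Set.mem_biUnion ⟨⟨β, bb⟩, hiJ, rfl⟩ ?_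
        exact Set.mem_biUnion ⟨bb, hiJ, rfl⟩ hmem
    haveI : Filter.NeBot (Filter.generate (Set.range sfun)) :=
      Filter.generate_neBot_iff.2 hfip
    obtain ⟨D, hD⟩ := Ultrafilter.exists_le (Filter.generate (Set.range sfun))
    have hmemD : ∀ i : I, sfun i ∈ D :=
      fun i => hD (Filter.GenerateSets.basic (Set.mem_range_self i))
    -- D almost covers lam
    have hDcov : AlmostCovers D := by
      unfold AlmostCovers
      apply le_antisymm
      · calc #{α : Quotient.out lam | {s : SmallSet mu lam | α ∈ s.val} ∈ D}
            ≤ #(Quotient.out lam) := Cardinal.mk_set_le _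
          _ = lam := Cardinal.mk_out lam
      · calc lam = #T := hT.symm
          _ ≤ _ := Cardinal.mk_le_mk_of_subset (fun α hα => hmemD (Sum.inl ⟨α, hα⟩))
    obtain ⟨β, hβ⟩ := hf D hDcov
    -- but map (f β) D cannot almost cover lam'
    have hsub : {b : Quotient.out lam' |
        {s' : SmallSet mu' lam' | b ∈ s'.val} ∈ Ultrafilter.map (f β) D} ⊆ (g β).val := by
      intro b hb
      by_contra hbg
      have h1 : f β ⁻¹' {s' : SmallSet mu' lam' | b ∈ s'.val} ∈ D := Ultrafilter.mem_map.1 hb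
      have h2 : (f β ⁻¹' {s' : SmallSet mu' lam' | b ∈ s'.val})ᶜ ∈ D :=
        hmemD (Sum.inr ⟨β, ⟨b, hbg⟩⟩)
      exact absurd (D.toFilter.inter_mem h1 h2) (by simp)
    have h := Cardinal.mk_le_mk_of_subset hsub
    unfold AlmostCovers at hβ
    rw [hβ] at h
    exact absurd ((g β).2) (not_lt.2 h)
  · rintro ⟨f, hf⟩
    refine ⟨f, fun D hD => ?_⟩
    by_contra hcon
    push_neg at hcon
    -- for each β the pushforward set is small
    have hsmall : ∀ β : Quotient.out kappa,
        #{b : Quotient.out lam' |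
          {s' : SmallSet mu' lam' | b ∈ s'.val} ∈ Ultrafilter.map (f β) D} < lam' := by
      intro β
      refine lt_of_le_of_ne ?_ (hcon β)
      calc _ ≤ #(Quotient.out lam') := Cardinal.mk_set_le _
        _ = lam' := Cardinal.mk_out lam'
    let g : Quotient.out kappa → SmallSet lam' lam' := fun β =>
      ⟨{b : Quotient.out lam' |
          {s' : SmallSet mu' lam' | b ∈ s'.val} ∈ Ultrafilter.map (f β) D}, hsmall β⟩
    obtain ⟨G, F, H, hGfin, hGT, hFfin, hH, hcov⟩ :=
      hf {α : Quotient.out lam | {s : SmallSet mu lam | α ∈ s.val} ∈ D} hD g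
    -- [G] ∈ D
    have hGD : {s : SmallSet mu lam | G ⊆ s.val} ∈ D := by
      have heq : {s : SmallSet mu lam | G ⊆ s.val}
          = ⋂ α ∈ G, {s : SmallSet mu lam | α ∈ s.val} := by
        ext s; simp [Set.subset_def]
      rw [heq]
      exact (Filter.biInter_mem (f := (D : Filter (SmallSet mu lam))) hGfin).2
        fun α hα => hGT hα
    have hU : (⋃ β ∈ F, ⋃ b ∈ H β,
        f β ⁻¹' {s' : SmallSet mu' lam' | b ∈ s'.val}) ∈ D :=
      D.toFilter.mem_of_superset hGD hcov
    rw [Ultrafilter.finite_biUnion_mem_iff hFfin] at hU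
    obtain ⟨β, hβF, hβ⟩ := hU
    rw [Ultrafilter.finite_biUnion_mem_iff (hH β hβF).1] at hβ
    obtain ⟨b, hbH, hb⟩ := hβ
    have : b ∈ (g β).val := Ultrafilter.mem_map.2 hb
    exact (hH β hβF).2 hbH this
end

section
/- Let λ ≥ μ and λ' ≥ μ' be infinite cardinals and κ any cardinal. Then almost(λ,μ) ⇒^κ almost(λ',μ') holds if and only if there is a family (C_{α,β})_{α∈λ', β∈κ} of subsets of S_μ(λ) such that: (i) for every β ∈ κ and every H ⊆ λ' with |H| ≥ μ', ⋂_{α∈H} C_{α,β} = ∅; and (ii) for every T ⊆ λ with |T| = λ and every function g : κ → S_{λ'}(λ') there exist a finite set G ⊆ T, a finite set F ⊆ κ, and, for each β ∈ F, a finite set H_β ⊆ λ' \ g(β), such that [G] ⊆ ⋃_{β∈F, β*∈H_β} C_{β*,β}. -/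
open Cardinal Set

universe u

/-- Theorem 10, (a) ↔ (c): `almost (λ,μ) ⇒^κ almost (λ',μ')` holds iff there is a family `(C_{α,β})` with the corresponding intersection and covering properties. -/
theorem almAlmRel_iff_interFamily (lam mu lam' mu' kappa : Cardinal.{u})
    (hmu : ℵ₀ ≤ mu) (hml : mu ≤ lam) (hmu' : ℵ₀ ≤ mu') (hml' : mu' ≤ lam') :
    AlmAlmRel lam mu lam' mu' kappa ↔
      (∃ C : Quotient.out lam' → Quotient.out kappa → Set (SmallSet mu lam),
        (∀ β : Quotient.out kappa, ∀ H : Set (Quotient.out lam'),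
          mu' ≤ #H → ⋂ α ∈ H, C α β = (∅ : Set (SmallSet mu lam))) ∧
        (∀ T : Set (Quotient.out lam), #T = lam →
          ∀ g : Quotient.out kappa → SmallSet lam' lam',
            ∃ (G : Set (Quotient.out lam)) (F : Set (Quotient.out kappa))
              (H : Quotient.out kappa → Set (Quotient.out lam')),
              G.Finite ∧ G ⊆ T ∧ F.Finite ∧
              (∀ β ∈ F, (H β).Finite ∧ H β ⊆ ((g β).val)ᶜ) ∧
                {s : SmallSet mu lam | G ⊆ s.val} ⊆
                  ⋃ β ∈ F, ⋃ b ∈ H β, C b β)) := by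
  constructor
  · rintro ⟨f, hf⟩
    refine ⟨fun α β => {s | α ∈ (f β s).val}, ?_, ?_⟩
    · -- (i)
      intro β H hH
      ext s
      simp only [mem_iInter, mem_setOf_eq, mem_empty_iff_false, iff_false]
      intro hs
      have hsub : H ⊆ (f β s).val := fun α hα => hs α hα
      exact absurd ((hH.trans (mk_le_mk_of_subset hsub)).trans_lt (f β s).2) (lt_irrefl _)
    · -- (ii)
      intro T hT g
      by_contra hcon
      push_neg at hcon
      -- index type for the generating family
      set C : Quotient.out lam' → Quotient.out kappa → Set (SmallSet mu lam) :=
        fun α β => {s | α ∈ (f β s).val} with hC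
      let I := {α // α ∈ T} ⊕ {p : Quotient.out lam' × Quotient.out kappa // p.1 ∉ (g p.2).val}
      let e : I → Set (SmallSet mu lam) := fun i =>
        Sum.rec (fun a => {s : SmallSet mu lam | a.val ∈ s.val})
          (fun p => (C p.val.1 p.val.2)ᶜ) i
      have hne : Filter.NeBot (Filter.generate (e '' univ)) := by
        rw [Filter.generate_neBot_iff]
        intro t ht htfin
        -- extract a finite index set
        obtain ⟨u, -, hufin, hut⟩ :
            ∃ u ⊆ (univ : Set I), u.Finite ∧ e '' u = t := by
          have := (Set.exists_subset_image_finite_and (f := e) (s := univ)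
            (p := fun t' => t' = t)).mp ⟨t, ht, htfin, rfl⟩
          obtain ⟨u, hu, hufin, heq⟩ := this
          exact ⟨u, hu, hufin, heq⟩
        set G : Set (Quotient.out lam) := Subtype.val '' (Sum.inl ⁻¹' u) with hG
        set P : Set (Quotient.out lam' × Quotient.out kappa) :=
          Subtype.val '' (Sum.inr ⁻¹' u) with hP
        have hGfin : G.Finite := ((hufin.preimage Sum.inl_injective.injOn).image _)
        have hPfin : P.Finite := ((hufin.preimage Sum.inr_injective.injOn).image _)
        have hGT : G ⊆ T := by rintro α ⟨a, -, rfl⟩; exact a.2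
        set F : Set (Quotient.out kappa) := Prod.snd '' P with hF
        set H : Quotient.out kappa → Set (Quotient.out lam') :=
          fun β => {b | (b, β) ∈ P} with hH
        have key := hcon G F H hGfin hGT (hPfin.image _)
          (by
            intro β hβ
            constructor
            · exact (hPfin.image Prod.fst).subset (by rintro b hb; exact ⟨(b, β), hb, rfl⟩)
            · rintro b hb
              obtain ⟨p, -, hp⟩ := hb
              have := p.2
              rw [hp] at this
              exact this)
        obtain ⟨s, hsG, hsU⟩ := not_subset.mp key
        refine ⟨s, ?_⟩
        rintro x hx
        rw [← hut] at hx
        obtain ⟨i, hi, rfl⟩ := hx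
        cases i with
        | inl a =>
          exact hsG ⟨a, hi, rfl⟩
        | inr p =>
          intro hs
          apply hsU
          refine mem_iUnion₂.mpr ⟨p.val.2, ⟨p.val, ⟨p, hi, rfl⟩, rfl⟩, ?_⟩
          exact mem_iUnion₂.mpr ⟨p.val.1, ⟨p, hi, rfl⟩, hs⟩
      obtain ⟨D, hD⟩ := Filter.exists_ultrafilter_le (Filter.generate (e '' univ))
      have hmemD : ∀ i : I, e i ∈ D := fun i =>
        hD (Filter.GenerateSets.basic ⟨i, mem_univ i, rfl⟩)
      have hDAC : AlmostCovers D := by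
        have hsub : T ⊆ {α : Quotient.out lam |
            {s : SmallSet mu lam | α ∈ s.val} ∈ D} := by
          intro α hα
          exact hmemD (Sum.inl ⟨α, hα⟩)
        refine le_antisymm ?_ ?_
        · exact (mk_set_le _).trans_eq (mk_out lam)
        · calc lam = #T := hT.symm
            _ ≤ _ := mk_le_mk_of_subset hsub
      obtain ⟨β, hβ⟩ := hf D hDAC
      have hsub' : {α : Quotient.out lam' |
          {s : SmallSet mu' lam' | α ∈ s.val} ∈ Ultrafilter.map (f β) D} ⊆ (g β).val := by
        intro α hα
        by_contra hαg
        have h1 : (C α β)ᶜ ∈ D := hmemD (Sum.inr ⟨(α, β), hαg⟩)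
        have h2 : C α β ∈ D := hα
        exact (Ultrafilter.compl_mem_iff_notMem.mp h1) h2
      have : lam' ≤ #((g β).val) :=
        le_of_eq_of_le hβ.symm (mk_le_mk_of_subset hsub')
      exact absurd (this.trans_lt (g β).2) (lt_irrefl _)
  · rintro ⟨C, h1, h2⟩
    have hfsm : ∀ (β : Quotient.out kappa) (s : SmallSet mu lam),
        #{α : Quotient.out lam' | s ∈ C α β} < mu' := by
      intro β s
      by_contra hlt
      push_neg at hlt
      have := h1 β _ hlt
      have hs : s ∈ ⋂ α ∈ {α | s ∈ C α β}, C α β := by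
        simp only [mem_iInter, mem_setOf_eq]
        exact fun α hα => hα
      rw [this] at hs
      exact hs
    refine ⟨fun β s => ⟨{α | s ∈ C α β}, hfsm β s⟩, ?_⟩
    intro D hD
    by_contra hcon
    push_neg at hcon
    have hpre : ∀ (β : Quotient.out kappa) (α : Quotient.out lam'),
        (fun s => (⟨{α | s ∈ C α β}, hfsm β s⟩ : SmallSet mu' lam')) ⁻¹'
          {s' : SmallSet mu' lam' | α ∈ s'.val} = C α β := by
      intro β α; rfl
    have hglt : ∀ β : Quotient.out kappa,
        #{α : Quotient.out lam' | C α β ∈ D} < lam' := by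
      intro β
      refine lt_of_le_of_ne ((mk_set_le _).trans_eq (mk_out lam')) ?_
      intro heq
      apply hcon β
      unfold AlmostCovers
      have hset : {α : Quotient.out lam' |
          {s' : SmallSet mu' lam' | α ∈ s'.val} ∈
            Ultrafilter.map (fun s => (⟨{α | s ∈ C α β}, hfsm β s⟩ : SmallSet mu' lam')) D} =
          {α : Quotient.out lam' | C α β ∈ D} := by
        ext α
        simp only [mem_setOf_eq, Ultrafilter.mem_map]
        rw [hpre β α]
      rw [hset, heq]
    set g : Quotient.out kappa → SmallSet lam' lam' :=
      fun β => ⟨{α | C α β ∈ D}, hglt β⟩ with hg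
    set T : Set (Quotient.out lam) :=
      {α | {s : SmallSet mu lam | α ∈ s.val} ∈ D} with hTdef
    obtain ⟨G, F, H, hGfin, hGT, hFfin, hHfin, hcov⟩ := h2 T hD g
    have hGD : {s : SmallSet mu lam | G ⊆ s.val} ∈ D := by
      have : {s : SmallSet mu lam | G ⊆ s.val} =
          ⋂ α ∈ G, {s : SmallSet mu lam | α ∈ s.val} := by
        ext s; simp [Set.subset_def]
      rw [this]
      exact (Filter.biInter_mem hGfin).mpr fun α hα => hGT hα
    have hU : (⋃ β ∈ F, ⋃ b ∈ H β, C b β) ∈ D := D.toFilter.mem_of_superset hGD hcov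
    obtain ⟨β, hβF, hβ⟩ := (Ultrafilter.finite_biUnion_mem_iff hFfin).mp hU
    obtain ⟨b, hbH, hb⟩ := (Ultrafilter.finite_biUnion_mem_iff (hHfin β hβF).1).mp hβ
    exact (hHfin β hβF).2 hbH hb
end

section
/- Let ν be a regular (infinite) cardinal and let f : S_ν(ν) → S_ν(ν) be the function defined by f(x) = {β : β < sup x} (the set of ordinals below the supremum of x; this set has cardinality less than ν by regularity of ν). If D is an ultrafilter on S_ν(ν) that almost covers ν, then the pushforward ultrafilter f(D) covers ν. In particular, almost(ν,ν) ⇒^1 (ν,ν) holds. -/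
open Cardinal Set Ordinal

universe u

/-- `SmallSetO ν` : the set `S_ν(ν)` of all subsets of (the canonical ordered
carrier of) `ν` of cardinality `< ν`. -/
abbrev SmallSetO (nu : Cardinal.{u}) : Type u :=
  {s : Set nu.ord.ToType // #s < nu}

/-- An ultrafilter `D` on `S_ν(ν)` covers `ν` if `[{α}] ∈ D` for every `α ∈ ν`. -/
def CoversO {nu : Cardinal.{u}} (D : Ultrafilter (SmallSetO nu)) : Prop :=
  ∀ α : nu.ord.ToType, {s : SmallSetO nu | α ∈ s.val} ∈ D

/-- An ultrafilter `D` on `S_ν(ν)` almost covers `ν` if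
`{α ∈ ν : [{α}] ∈ D}` has cardinality `ν`. -/
def AlmostCoversO {nu : Cardinal.{u}} (D : Ultrafilter (SmallSetO nu)) : Prop :=
  #{α : nu.ord.ToType | {s : SmallSetO nu | α ∈ s.val} ∈ D} = nu

/-- The ordinal (below `ν`) corresponding to an element of the carrier of `ν`. -/
noncomputable def ordOf {nu : Cardinal.{u}} (β : nu.ord.ToType) : Ordinal.{u} :=
  ((Ordinal.ToType.mk (o := nu.ord)).symm β : Ordinal)

theorem ordOf_lt {nu : Cardinal.{u}} (β : nu.ord.ToType) : ordOf β < nu.ord :=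
  ((Ordinal.ToType.mk (o := nu.ord)).symm β).2

theorem ordOf_injective {nu : Cardinal.{u}} : Function.Injective (ordOf (nu := nu)) :=
  fun a b h => (Ordinal.ToType.mk (o := nu.ord)).symm.injective (Subtype.ext h)

/-- If `ν` is a regular cardinal and `f : S_ν(ν) → S_ν(ν)` is the function
`f(x) = {β : β < sup x}`, then the pushforward under `f` of any ultrafilter
almost covering `ν` covers `ν`; in particular,
`almost (ν, ν) ⇒¹ (ν, ν)` holds. -/
theorem almost_implies_covers_of_regular (nu : Cardinal.{u}) (hreg : nu.IsRegular)
    (f : SmallSetO nu → SmallSetO nu)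
    (hf : ∀ x : SmallSetO nu,
      ((f x) : Set nu.ord.ToType) =
        {β : nu.ord.ToType | ordOf β < sSup (ordOf '' (x : Set nu.ord.ToType))}) :
    (∀ D : Ultrafilter (SmallSetO nu), AlmostCoversO D →
        CoversO (Ultrafilter.map f D)) ∧
      (∃ g : SmallSetO nu → SmallSetO nu,
        ∀ D : Ultrafilter (SmallSetO nu), AlmostCoversO D →
          CoversO (Ultrafilter.map g D)) := by
  have main : ∀ D : Ultrafilter (SmallSetO nu), AlmostCoversO D →
      CoversO (Ultrafilter.map f D) := by
    intro D hD α
    set γ : Ordinal.{u} := ordOf α with hγdef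
    have hγ : γ < nu.ord := ordOf_lt α
    -- find β with γ < ordOf β and [{β}] ∈ D
    obtain ⟨β, hβD, hβγ⟩ :
        ∃ β : nu.ord.ToType, {s : SmallSetO nu | β ∈ s.val} ∈ D ∧ γ < ordOf β := by
      by_contra h
      push_neg at h
      set A := {α : nu.ord.ToType | {s : SmallSetO nu | α ∈ s.val} ∈ D}
      have hsub : ∀ β ∈ A, ordOf β ≤ γ := fun β hβ => h β hβ
      -- inject A into Iio (succ γ)
      have hinj : Function.Injective
          (fun b : A => (⟨ordOf b.1, (Order.lt_succ_of_le (hsub b.1 b.2))⟩ :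
            Iio (Order.succ γ))) := by
        intro a b hab
        simp only [Subtype.mk.injEq] at hab
        exact Subtype.ext (ordOf_injective (Subtype.mk.inj hab))
      have hle : Cardinal.lift.{u+1} #A ≤ Cardinal.lift.{u} #(Iio (Order.succ γ)) :=
        Cardinal.lift_mk_le'.2 ⟨⟨_, hinj⟩⟩
      rw [Cardinal.mk_Iio_ordinal, Cardinal.lift_lift] at hle
      have hle' : #A ≤ (Order.succ γ).card := by
        exact_mod_cast (Cardinal.lift_le).1 hle
      have hsucc : Order.succ γ < nu.ord :=
        (Cardinal.isSuccLimit_ord hreg.aleph0_le).succ_lt hγ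
      have : #A < nu := lt_of_le_of_lt hle' (Cardinal.lt_ord.1 hsucc)
      rw [hD] at this
      exact lt_irrefl _ this
    rw [Ultrafilter.mem_map]
    apply D.toFilter.mem_of_superset hβD
    intro s hs
    have hbdd : BddAbove (ordOf '' (s : Set nu.ord.ToType)) := by
      refine ⟨nu.ord, ?_⟩
      rintro o ⟨b, -, rfl⟩
      exact (ordOf_lt b).le
    have hmem : ordOf β ∈ ordOf '' (s : Set nu.ord.ToType) := ⟨β, hs, rfl⟩
    have : γ < sSup (ordOf '' (s : Set nu.ord.ToType)) :=
      lt_of_lt_of_le hβγ (le_csSup hbdd hmem)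
    show α ∈ ((f s) : Set nu.ord.ToType)
    rw [hf s]
    exact this
  exact ⟨main, f, main⟩
end
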